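/- arXiv:2206.13777 — 5 statements merged into one kernel-verified Lean document; each statement's English description precedes it below -/
import Mathlib

section
/- Assume there exists a positive radially symmetric C² function U : ℝ³ → ℝ with ∫_{ℝ³}(|∇U|² + U²) < ∞ such that every positive C² solution v of −Δv + v = v^{q−1} on ℝ³ with ∫_{ℝ³}(|∇v|² + v²) < ∞ equals U(· − z) for some z ∈ ℝ³. Then for any two positive C² solutions u₁, u₂ of −(a + bk∫_{ℝ³}|∇u|²)Δu + u = Q₀ u^{q−1} on ℝ³ with ∫_{ℝ³}(|∇u_i|² + u_i²) < ∞ (i = 1, 2), one has ∫_{ℝ³}|∇u₁|² = ∫_{ℝ³}|∇u₂|²; more precisely, the number c = a + bk∫_{ℝ³}|∇u_i|² is the same for i = 1, 2 and satisfies √c = (b̃ + √(b̃² + 4a))/2, where b̃ = bk Q₀^{−2/(q−2)} ∫_{ℝ³}|∇U|². -/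
open MeasureTheory Real Filter

noncomputable section

abbrev E3 : Type := EuclideanSpace ℝ (Fin 3)

/-- The Laplacian of `u : ℝ³ → ℝ`, as the sum of the second partial derivatives. -/
def lap (u : E3 → ℝ) (x : E3) : ℝ :=
  ∑ i : Fin 3, iteratedFDeriv ℝ 2 u x ![EuclideanSpace.single i 1, EuclideanSpace.single i 1]

/-- The square of the norm `‖u‖_ε`. -/
def normESq (ε a : ℝ) (u : E3 → ℝ) : ℝ :=
  ∫ x : E3, (ε ^ 2 * a * ‖gradient u x‖ ^ 2 + (u x) ^ 2)

/-- The norm `‖u‖_ε`. -/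
def normE (ε a : ℝ) (u : E3 → ℝ) : ℝ := Real.sqrt (normESq ε a u)

/-- `‖u‖_ε < ∞`. -/
def FiniteE (ε a : ℝ) (u : E3 → ℝ) : Prop :=
  Integrable (fun x : E3 => ε ^ 2 * a * ‖gradient u x‖ ^ 2 + (u x) ^ 2)


/-! The substitution `v x = Q ^ (1 / (q - 2)) * u (√c • x)`, with `c` the Kirchhoff coefficient
of `u`, turns `u` into a positive solution of `-Δv + v = v ^ (q - 1)`, hence into a translate of
`U`. Since the Dirichlet energy scales like `Q ^ (2 / (q - 2)) / √c` under this substitution,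
`√c` is a positive root of `s ^ 2 = a + b̃ * s`, and that root is unique. -/

open InnerProductSpace

section Gradient

variable {F : Type*} [NormedAddCommGroup F] [InnerProductSpace ℝ F] [CompleteSpace F]

theorem ContDiff.continuous_gradient {u : F → ℝ} (hu : ContDiff ℝ 1 u) :
    Continuous (gradient u) :=
  (toDual ℝ F).symm.continuous.comp (hu.continuous_fderiv one_ne_zero)

theorem gradient_comp_sub (u : F → ℝ) (z x : F) :
    gradient (fun y => u (y - z)) x = gradient u (x - z) := by
  simp only [gradient, fderiv_comp_sub]

theorem gradient_const_mul_comp_smul {u : F → ℝ} {x : F} (μ s : ℝ)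
    (hu : DifferentiableAt ℝ u (s • x)) :
    gradient (fun y => μ * u (s • y)) x = (μ * s) • gradient u (s • x) := by
  have hcomp : DifferentiableAt ℝ (fun y => u (s • y)) x :=
    hu.comp x (differentiableAt_id.const_smul s)
  simp only [gradient, fderiv_const_mul hcomp, fderiv_comp_smul (f := u), smul_smul, map_smul]

end Gradient

section Integral

variable {F : Type*} [NormedAddCommGroup F] [InnerProductSpace ℝ F] [CompleteSpace F]
  [MeasurableSpace F] [BorelSpace F] (ν : Measure F)

theorem integral_norm_gradient_sq_comp_sub [ν.IsAddRightInvariant] (u : F → ℝ) (z : F) :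
    ∫ x, ‖gradient (fun y => u (y - z)) x‖ ^ 2 ∂ν = ∫ x, ‖gradient u x‖ ^ 2 ∂ν := by
  simp only [gradient_comp_sub]
  exact integral_sub_right_eq_self (fun x => ‖gradient u x‖ ^ 2) z

theorem integral_norm_gradient_sq_const_mul_comp_smul [FiniteDimensional ℝ F]
    [ν.IsAddHaarMeasure] {u : F → ℝ} (hu : Differentiable ℝ u) (μ : ℝ) {s : ℝ} (hs : 0 ≤ s) :
    ∫ x, ‖gradient (fun y => μ * u (s • y)) x‖ ^ 2 ∂ν
      = (μ * s) ^ 2 * (s ^ Module.finrank ℝ F)⁻¹ * ∫ x, ‖gradient u x‖ ^ 2 ∂ν := by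
  simp only [gradient_const_mul_comp_smul μ s (hu _), norm_smul, mul_pow, Real.norm_eq_abs,
    sq_abs, integral_const_mul]
  rw [Measure.integral_comp_smul_of_nonneg ν (fun y => ‖gradient u y‖ ^ 2) s (hR := hs),
    smul_eq_mul]
  ring

theorem MeasureTheory.Integrable.norm_gradient_sq_add_sq_const_mul_comp_smul
    [FiniteDimensional ℝ F] [ν.IsAddHaarMeasure] {u : F → ℝ} (hu : ContDiff ℝ 1 u)
    (hint : Integrable (fun x => ‖gradient u x‖ ^ 2 + u x ^ 2) ν) (μ : ℝ) {s : ℝ} (hs : s ≠ 0) :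
    Integrable (fun x => ‖gradient (fun y => μ * u (s • y)) x‖ ^ 2 + (μ * u (s • x)) ^ 2) ν := by
  have hdiff : Differentiable ℝ u := hu.differentiable one_ne_zero
  simp only [gradient_const_mul_comp_smul μ s (hdiff _), norm_smul, mul_pow, Real.norm_eq_abs,
    sq_abs]
  refine ((hint.comp_smul hs).const_mul ((μ * s) ^ 2 + μ ^ 2)).mono' ?_ ?_
  · have := hu.continuous_gradient
    fun_prop
  · refine Eventually.of_forall fun x => ?_
    rw [Real.norm_of_nonneg (by positivity)]
    nlinarith [mul_nonneg (sq_nonneg μ) (sq_nonneg ‖gradient u (s • x)‖),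
      mul_nonneg (sq_nonneg (μ * s)) (sq_nonneg (u (s • x)))]

end Integral

theorem lap_const_mul_comp_smul {u : E3 → ℝ} (hu : ContDiff ℝ 2 u) (μ s : ℝ) (x : E3) :
    lap (fun y => μ * u (s • y)) x = μ * s ^ 2 * lap u (s • x) := by
  set L : E3 →L[ℝ] E3 := s • ContinuousLinearMap.id ℝ E3
  have hcomp : ContDiff ℝ 2 (u ∘ L) := hu.comp L.contDiff
  have hsecond (v : E3) : iteratedFDeriv ℝ 2 (fun y => μ • (u ∘ L) y) x ![v, v]
      = μ * s ^ 2 * iteratedFDeriv ℝ 2 u (s • x) ![v, v] := by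
    rw [iteratedFDeriv_const_smul_apply' hcomp.contDiffAt,
      L.iteratedFDeriv_comp_right hu x le_rfl, smul_apply,
      ContinuousMultilinearMap.compContinuousLinearMap_apply]
    have hL : (fun j => L (![v, v] j)) = fun j => s • ![v, v] j := by
      funext j; simp [L]
    rw [hL, ContinuousMultilinearMap.map_smul_univ]
    simp [L, smul_eq_mul, mul_assoc]
  simp only [lap, Finset.mul_sum]
  exact Finset.sum_congr rfl fun i _ => hsecond _

theorem eq_add_sqrt_div_two_of_sq_eq {a B s : ℝ} (ha : 0 ≤ a) (hs : 0 < s)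
    (h : s ^ 2 = a + B * s) : s = (B + √(B ^ 2 + 4 * a)) / 2 := by
  have hBs : B ≤ s := by nlinarith
  rw [show B ^ 2 + 4 * a = (2 * s - B) ^ 2 by linear_combination -4 * h,
    Real.sqrt_sq (by linarith)]
  ring

structure IsPositiveSolution (c Q q : ℝ) (v : E3 → ℝ) : Prop where
  pos : ∀ x, 0 < v x
  contDiff : ContDiff ℝ 2 v
  integrable : Integrable fun x => ‖gradient v x‖ ^ 2 + v x ^ 2
  eq : ∀ x, -c * lap v x + v x = Q * v x ^ (q - 1)

namespace IsPositiveSolution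

variable {c Q q : ℝ} {u : E3 → ℝ}

theorem rescale (hu : IsPositiveSolution c Q q u) (hc : 0 < c) (hQ : 0 < Q) (hq : q ≠ 2) :
    IsPositiveSolution 1 1 q (fun x => Q ^ (q - 2)⁻¹ * u (√c • x)) where
  pos x := mul_pos (Real.rpow_pos_of_pos hQ _) (hu.pos _)
  contDiff := contDiff_const.mul (hu.contDiff.comp (contDiff_const_smul _))
  integrable := hu.integrable.norm_gradient_sq_add_sq_const_mul_comp_smul volume
    (hu.contDiff.of_le one_le_two) _ (Real.sqrt_pos.2 hc).ne'
  eq x := by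
    set μ := Q ^ (q - 2)⁻¹ with hμ_def
    have hμ : 0 < μ := Real.rpow_pos_of_pos hQ _
    have hμ_pow : μ ^ (q - 1) = μ * Q := by
      rw [show q - 1 = 1 + (q - 2) by ring, Real.rpow_add hμ, Real.rpow_one, hμ_def,
        ← Real.rpow_mul hQ.le, inv_mul_cancel₀ (sub_ne_zero.2 hq), Real.rpow_one]
    rw [lap_const_mul_comp_smul hu.contDiff, Real.sq_sqrt hc.le,
      Real.mul_rpow hμ.le (hu.pos _).le, hμ_pow]
    linear_combination μ * hu.eq (√c • x)

theorem sqrt_kirchhoff_coeff_eq {U : E3 → ℝ}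
    (hU : ∀ v, IsPositiveSolution 1 1 q v → ∃ z, ∀ x, v x = U (x - z))
    {a β : ℝ} (ha : 0 < a) (hβ : 0 ≤ β) (hQ : 0 < Q) (hq : q ≠ 2)
    (hu : IsPositiveSolution (a + β * ∫ x, ‖gradient u x‖ ^ 2) Q q u) :
    √(a + β * ∫ x, ‖gradient u x‖ ^ 2)
      = ((β * Q ^ (-2 / (q - 2)) * ∫ x, ‖gradient U x‖ ^ 2)
          + √((β * Q ^ (-2 / (q - 2)) * ∫ x, ‖gradient U x‖ ^ 2) ^ 2 + 4 * a)) / 2 := by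
  set T := ∫ x, ‖gradient u x‖ ^ 2
  have hc : 0 < a + β * T := by positivity
  set s := √(a + β * T)
  have hs : 0 < s := Real.sqrt_pos.2 hc
  set μ := Q ^ (q - 2)⁻¹
  obtain ⟨z, hz⟩ := hU _ (hu.rescale hc hQ hq)
  have henergy : ∫ x, ‖gradient U x‖ ^ 2 = μ ^ 2 * s ^ 2 * (s ^ 3)⁻¹ * T := by
    rw [← integral_norm_gradient_sq_comp_sub volume U z, ← funext hz]
    simpa [mul_pow] using integral_norm_gradient_sq_const_mul_comp_smul volume
      (hu.contDiff.differentiable two_ne_zero) μ hs.le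
  have hμ : Q ^ (-2 / (q - 2)) * μ ^ 2 = 1 := by
    rw [← Real.rpow_natCast, ← Real.rpow_mul hQ.le, ← Real.rpow_add hQ,
      show -2 / (q - 2) + (q - 2)⁻¹ * ((2 : ℕ) : ℝ) = 0 by push_cast; ring, Real.rpow_zero]
  refine eq_add_sqrt_div_two_of_sq_eq ha.le hs ?_
  rw [Real.sq_sqrt hc.le, henergy,
    show β * Q ^ (-2 / (q - 2)) * (μ ^ 2 * s ^ 2 * (s ^ 3)⁻¹ * T) * s
      = β * T * (Q ^ (-2 / (q - 2)) * μ ^ 2) * (s ^ 3 * (s ^ 3)⁻¹) by ring,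
    hμ, mul_inv_cancel₀ (by positivity), mul_one, mul_one]

end IsPositiveSolution

theorem statement3_general (k : ℕ) (hk : 0 < k) (a b : ℝ) (ha : 0 < a) (hb : 0 < b)
    (q : ℝ) (hq1 : 2 < q) (Q0 : ℝ) (hQ0 : 0 < Q0)
    (U : E3 → ℝ)
    (hUuniq : ∀ v : E3 → ℝ, (∀ x, 0 < v x) → ContDiff ℝ 2 v →
        (Integrable fun x : E3 => ‖gradient v x‖ ^ 2 + (v x) ^ 2) →
        (∀ x, -lap v x + v x = (v x) ^ (q - 1)) →
        ∃ z : E3, ∀ x, v x = U (x - z))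
    (u₁ u₂ : E3 → ℝ)
    (h1pos : ∀ x, 0 < u₁ x) (h1C2 : ContDiff ℝ 2 u₁)
    (h1int : Integrable fun x : E3 => ‖gradient u₁ x‖ ^ 2 + (u₁ x) ^ 2)
    (h1eq : ∀ x, -(a + b * k * ∫ z : E3, ‖gradient u₁ z‖ ^ 2) * lap u₁ x + u₁ x
        = Q0 * (u₁ x) ^ (q - 1))
    (h2pos : ∀ x, 0 < u₂ x) (h2C2 : ContDiff ℝ 2 u₂)
    (h2int : Integrable fun x : E3 => ‖gradient u₂ x‖ ^ 2 + (u₂ x) ^ 2)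
    (h2eq : ∀ x, -(a + b * k * ∫ z : E3, ‖gradient u₂ z‖ ^ 2) * lap u₂ x + u₂ x
        = Q0 * (u₂ x) ^ (q - 1)) :
    (∫ z : E3, ‖gradient u₁ z‖ ^ 2) = (∫ z : E3, ‖gradient u₂ z‖ ^ 2) ∧
    (a + b * k * ∫ z : E3, ‖gradient u₁ z‖ ^ 2)
      = (a + b * k * ∫ z : E3, ‖gradient u₂ z‖ ^ 2) ∧
    Real.sqrt (a + b * k * ∫ z : E3, ‖gradient u₁ z‖ ^ 2)
      = ((b * k * Q0 ^ (-2 / (q - 2)) * ∫ z : E3, ‖gradient U z‖ ^ 2)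
          + Real.sqrt ((b * k * Q0 ^ (-2 / (q - 2)) * ∫ z : E3, ‖gradient U z‖ ^ 2) ^ 2
              + 4 * a)) / 2 := by
  have hU (v : E3 → ℝ) (hv : IsPositiveSolution 1 1 q v) : ∃ z, ∀ x, v x = U (x - z) :=
    hUuniq v hv.pos hv.contDiff hv.integrable fun x => by simpa using hv.eq x
  have hq : q ≠ 2 := hq1.ne'
  have hsqrt₁ := IsPositiveSolution.sqrt_kirchhoff_coeff_eq hU ha (by positivity) hQ0 hq
    ⟨h1pos, h1C2, h1int, h1eq⟩
  have hsqrt₂ := IsPositiveSolution.sqrt_kirchhoff_coeff_eq hU ha (by positivity) hQ0 hq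
    ⟨h2pos, h2C2, h2int, h2eq⟩
  have hcoeff : a + b * k * ∫ z, ‖gradient u₁ z‖ ^ 2 = a + b * k * ∫ z, ‖gradient u₂ z‖ ^ 2 :=
    (Real.sqrt_inj (by positivity) (by positivity)).1 (hsqrt₁.trans hsqrt₂.symm)
  exact ⟨mul_left_cancel₀ (by positivity) (add_left_cancel hcoeff), hcoeff, hsqrt₁⟩

theorem statement3 (k : ℕ) (hk : 0 < k) (a b : ℝ) (ha : 0 < a) (hb : 0 < b)
    (q : ℝ) (hq1 : 2 < q) (hq2 : q < 6) (Q0 : ℝ) (hQ0 : 0 < Q0)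
    (U : E3 → ℝ) (hUpos : ∀ x, 0 < U x)
    (hUrad : ∀ x y : E3, ‖x‖ = ‖y‖ → U x = U y)
    (hUC2 : ContDiff ℝ 2 U)
    (hUint : Integrable fun x : E3 => ‖gradient U x‖ ^ 2 + (U x) ^ 2)
    (hUuniq : ∀ v : E3 → ℝ, (∀ x, 0 < v x) → ContDiff ℝ 2 v →
        (Integrable fun x : E3 => ‖gradient v x‖ ^ 2 + (v x) ^ 2) →
        (∀ x, -lap v x + v x = (v x) ^ (q - 1)) →
        ∃ z : E3, ∀ x, v x = U (x - z))
    (u₁ u₂ : E3 → ℝ)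
    (h1pos : ∀ x, 0 < u₁ x) (h1C2 : ContDiff ℝ 2 u₁)
    (h1int : Integrable fun x : E3 => ‖gradient u₁ x‖ ^ 2 + (u₁ x) ^ 2)
    (h1eq : ∀ x, -(a + b * k * ∫ z : E3, ‖gradient u₁ z‖ ^ 2) * lap u₁ x + u₁ x
        = Q0 * (u₁ x) ^ (q - 1))
    (h2pos : ∀ x, 0 < u₂ x) (h2C2 : ContDiff ℝ 2 u₂)
    (h2int : Integrable fun x : E3 => ‖gradient u₂ x‖ ^ 2 + (u₂ x) ^ 2)
    (h2eq : ∀ x, -(a + b * k * ∫ z : E3, ‖gradient u₂ z‖ ^ 2) * lap u₂ x + u₂ x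
        = Q0 * (u₂ x) ^ (q - 1)) :
    (∫ z : E3, ‖gradient u₁ z‖ ^ 2) = (∫ z : E3, ‖gradient u₂ z‖ ^ 2) ∧
    (a + b * k * ∫ z : E3, ‖gradient u₁ z‖ ^ 2)
      = (a + b * k * ∫ z : E3, ‖gradient u₂ z‖ ^ 2) ∧
    Real.sqrt (a + b * k * ∫ z : E3, ‖gradient u₁ z‖ ^ 2)
      = ((b * k * Q0 ^ (-2 / (q - 2)) * ∫ z : E3, ‖gradient U z‖ ^ 2)
          + Real.sqrt ((b * k * Q0 ^ (-2 / (q - 2)) * ∫ z : E3, ‖gradient U z‖ ^ 2) ^ 2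
              + 4 * a)) / 2 :=
  statement3_general k hk a b ha hb q hq1 Q0 hQ0 U hUuniq u₁ u₂ h1pos h1C2 h1int h1eq h2pos h2C2
    h2int h2eq
end
end

section
/- Let n ≥ 1, a, a′ ∈ ℝ and 0 < b < b′. Let u, u′ : ℝⁿ → ℝ be positive continuous radial functions such that for some constants c₂ ≥ c₁ > 0 one has c₁|x|^a e^{−b|x|} ≤ u(x) ≤ c₂|x|^a e^{−b|x|} and c₁|x|^{a′} e^{−b′|x|} ≤ u′(x) ≤ c₂|x|^{a′} e^{−b′|x|} for all |x| ≥ 1, and suppose ∫_{ℝⁿ} u(x−ξ)u′(x)dx is finite for all ξ. Then there exist constants C₂ ≥ C₁ > 0 and R > 0 such that for every ξ ∈ ℝⁿ with |ξ| ≥ R: C₁ e^{−b|ξ|}|ξ|^a ≤ ∫_{ℝⁿ} u(x−ξ)u′(x)dx ≤ C₂ e^{−b|ξ|}|ξ|^a. -/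
/-!
Both `u` and `u'` are comparable, up to positive constants and on all of `ℝⁿ`, to weights
`w_{s,β}(x) = (1 + |x|)^s e^{-β|x|}` (near the origin by compactness and positivity).
By Peetre's inequality and the triangle inequality,
`w_{a,b}(ξ) w_{-|a|,b}(x) ≤ w_{a,b}(x - ξ) ≤ w_{a,b}(ξ) w_{|a|,-b}(x)`, so the integrand is
squeezed between `w_{a,b}(ξ)` times the integrable weights `w_{a'-|a|,b+b'}` and `w_{a'+|a|,b'-b}`.
Finally `w_{a,b}(ξ)` and `|ξ|^a e^{-b|ξ|}` agree up to a factor `2^{|a|}` when `|ξ| ≥ 1`.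
-/

open MeasureTheory Real Filter

theorem rpow_le_rpow_mul_rpow_abs {A B C : ℝ} (hA : 0 < A) (hC : 0 < C) (hAB : A ≤ B * C)
    (hBA : B ≤ A * C) (s : ℝ) : A ^ s ≤ B ^ s * C ^ |s| := by
  have hB : 0 < B := pos_of_mul_pos_left (hA.trans_le hAB) hC.le
  rcases le_or_gt 0 s with hs | hs
  · calc A ^ s ≤ (B * C) ^ s := rpow_le_rpow hA.le hAB hs
      _ = B ^ s * C ^ |s| := by rw [abs_of_nonneg hs, mul_rpow hB.le hC.le]
  · calc A ^ s = (A * C) ^ s * C ^ |s| := by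
          rw [mul_rpow hA.le hC.le, abs_of_neg hs, mul_assoc, ← rpow_add hC, add_neg_cancel,
            rpow_zero, mul_one]
      _ ≤ B ^ s * C ^ |s| := by gcongr ?_ * _; exact rpow_le_rpow_of_nonpos hB hBA hs.le

theorem one_add_norm_sub_le_mul {E : Type*} [SeminormedAddCommGroup E] (x y : E) :
    1 + ‖x - y‖ ≤ (1 + ‖x‖) * (1 + ‖y‖) := by
  nlinarith [norm_sub_le x y, mul_nonneg (norm_nonneg x) (norm_nonneg y)]

theorem one_add_norm_sub_rpow_le {E : Type*} [SeminormedAddCommGroup E] (x ξ : E) (s : ℝ) :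
    (1 + ‖x - ξ‖) ^ s ≤ (1 + ‖ξ‖) ^ s * (1 + ‖x‖) ^ |s| := by
  refine rpow_le_rpow_mul_rpow_abs (by positivity) (by positivity) ?_ ?_ s
  · rw [mul_comm]; exact one_add_norm_sub_le_mul x ξ
  · simpa [mul_comm] using one_add_norm_sub_le_mul x (x - ξ)

theorem one_add_norm_rpow_le {E : Type*} [SeminormedAddCommGroup E] (x ξ : E) (s : ℝ) :
    (1 + ‖ξ‖) ^ s ≤ (1 + ‖x - ξ‖) ^ s * (1 + ‖x‖) ^ |s| := by
  refine rpow_le_rpow_mul_rpow_abs (by positivity) (by positivity) ?_ ?_ s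
  · simpa [mul_comm] using one_add_norm_sub_le_mul x (x - ξ)
  · rw [mul_comm]; exact one_add_norm_sub_le_mul x ξ

theorem one_add_rpow_mul_exp_neg_le {β : ℝ} (hβ : 0 < β) (q : ℝ) {t : ℝ} (ht : 0 ≤ t) :
    (1 + t) ^ q * exp (-β * t) ≤ (⌈q⌉₊).factorial * exp β / β ^ ⌈q⌉₊ := by
  set N := ⌈q⌉₊
  have hpow : (1 + t) ^ q ≤ (1 + t) ^ N := by
    rw [← rpow_natCast]
    exact rpow_le_rpow_of_exponent_le (by linarith) (Nat.le_ceil q)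
  have hfact : (β * (1 + t)) ^ N / N.factorial ≤ exp (β * (1 + t)) :=
    Real.pow_div_factorial_le_exp _ (by positivity) N
  rw [mul_pow, div_le_iff₀ (by positivity)] at hfact
  rw [le_div_iff₀ (by positivity)]
  calc (1 + t) ^ q * exp (-β * t) * β ^ N ≤ (β ^ N * (1 + t) ^ N) * exp (-β * t) := by
        rw [mul_right_comm, mul_comm (β ^ N)]; gcongr
    _ ≤ exp (β * (1 + t)) * N.factorial * exp (-β * t) := by gcongr
    _ = N.factorial * exp β := by rw [mul_right_comm, ← exp_add]; ring_nf

noncomputable def expWeight {E : Type*} [Norm E] (s β : ℝ) (x : E) : ℝ :=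
  (1 + ‖x‖) ^ s * exp (-β * ‖x‖)

section expWeight

variable {E : Type*} [SeminormedAddCommGroup E]

theorem expWeight_pos (s β : ℝ) (x : E) : 0 < expWeight s β x := by
  unfold expWeight; positivity

theorem continuous_expWeight (s β : ℝ) : Continuous (expWeight s β : E → ℝ) := by
  unfold expWeight
  exact ((continuous_const.add continuous_norm).rpow_const fun x =>
    Or.inl (by positivity : (0 : ℝ) < 1 + ‖x‖).ne').mul (by fun_prop)

theorem expWeight_mul_expWeight (s t β γ : ℝ) (x : E) :
    expWeight s β x * expWeight t γ x = expWeight (s + t) (β + γ) x := by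
  simp only [expWeight, rpow_add (by positivity : (0 : ℝ) < 1 + ‖x‖), add_mul, neg_add, exp_add]
  ring

theorem expWeight_sub_le {β : ℝ} (hβ : 0 ≤ β) (s : ℝ) (x ξ : E) :
    expWeight s β (x - ξ) ≤ expWeight s β ξ * expWeight |s| (-β) x := by
  have hexp : exp (-β * ‖x - ξ‖) ≤ exp (-β * ‖ξ‖) * exp (-(-β) * ‖x‖) := by
    rw [← exp_add, exp_le_exp]
    nlinarith [norm_sub_norm_le ξ x, norm_sub_rev ξ x]
  calc expWeight s β (x - ξ)
      ≤ ((1 + ‖ξ‖) ^ s * (1 + ‖x‖) ^ |s|) * (exp (-β * ‖ξ‖) * exp (-(-β) * ‖x‖)) :=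
        mul_le_mul (one_add_norm_sub_rpow_le x ξ s) hexp (by positivity) (by positivity)
    _ = expWeight s β ξ * expWeight |s| (-β) x := by unfold expWeight; ring

theorem le_expWeight_sub {β : ℝ} (hβ : 0 ≤ β) (s : ℝ) (x ξ : E) :
    expWeight s β ξ * expWeight (-|s|) β x ≤ expWeight s β (x - ξ) := by
  have hpow : (1 + ‖ξ‖) ^ s * (1 + ‖x‖) ^ (-|s|) ≤ (1 + ‖x - ξ‖) ^ s := by
    rw [rpow_neg (by positivity), ← div_eq_mul_inv, div_le_iff₀ (by positivity)]
    exact one_add_norm_rpow_le x ξ s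
  have hexp : exp (-β * ‖ξ‖) * exp (-β * ‖x‖) ≤ exp (-β * ‖x - ξ‖) := by
    rw [← exp_add, exp_le_exp]
    nlinarith [norm_sub_le x ξ]
  calc expWeight s β ξ * expWeight (-|s|) β x
      = ((1 + ‖ξ‖) ^ s * (1 + ‖x‖) ^ (-|s|)) * (exp (-β * ‖ξ‖) * exp (-β * ‖x‖)) := by
        unfold expWeight; ring
    _ ≤ expWeight s β (x - ξ) := mul_le_mul hpow hexp (by positivity) (by positivity)

theorem expWeight_le_two_rpow_mul {x : E} (hx : 1 ≤ ‖x‖) (a b : ℝ) :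
    expWeight a b x ≤ 2 ^ |a| * (‖x‖ ^ a * exp (-b * ‖x‖)) := by
  have h := rpow_le_rpow_mul_rpow_abs (A := 1 + ‖x‖) (B := ‖x‖) (C := 2) (by positivity)
    two_pos (by linarith) (by linarith) a
  rw [expWeight, ← mul_assoc, mul_comm (2 ^ |a|)]
  gcongr

theorem rpow_mul_exp_le_two_rpow_mul_expWeight {x : E} (hx : 1 ≤ ‖x‖) (a b : ℝ) :
    ‖x‖ ^ a * exp (-b * ‖x‖) ≤ 2 ^ |a| * expWeight a b x := by
  have h := rpow_le_rpow_mul_rpow_abs (A := ‖x‖) (B := 1 + ‖x‖) (C := 2) (by positivity)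
    two_pos (by linarith) (by linarith) a
  rw [expWeight, ← mul_assoc, mul_comm (2 ^ |a|)]
  gcongr

theorem exists_forall_mul_expWeight_le_and_le [ProperSpace E] {v : E → ℝ} (hv : Continuous v)
    (hpos : ∀ x, 0 < v x) {a b c₁ c₂ : ℝ} (hc₁ : 0 < c₁) (hc₂ : 0 ≤ c₂)
    (hbound : ∀ x, 1 ≤ ‖x‖ →
      c₁ * ‖x‖ ^ a * exp (-b * ‖x‖) ≤ v x ∧ v x ≤ c₂ * ‖x‖ ^ a * exp (-b * ‖x‖)) :
    ∃ L U, 0 < L ∧ 0 < U ∧ ∀ x, L * expWeight a b x ≤ v x ∧ v x ≤ U * expWeight a b x := by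
  set ρ := fun x => v x / expWeight a b x
  have hρ : Continuous ρ := hv.div (continuous_expWeight a b) fun x => (expWeight_pos a b x).ne'
  have hρpos : ∀ x, 0 < ρ x := fun x => div_pos (hpos x) (expWeight_pos a b x)
  have hball : (Metric.closedBall (0 : E) 1).Nonempty :=
    ⟨0, Metric.mem_closedBall_self zero_le_one⟩
  obtain ⟨x₀, -, hmin⟩ := (isCompact_closedBall (0 : E) 1).exists_isMinOn hball hρ.continuousOn
  obtain ⟨x₁, -, hmax⟩ := (isCompact_closedBall (0 : E) 1).exists_isMaxOn hball hρ.continuousOn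
  refine ⟨min (ρ x₀) (c₁ / 2 ^ |a|), max (ρ x₁) (c₂ * 2 ^ |a|),
    lt_min (hρpos x₀) (by positivity), lt_max_of_lt_left (hρpos x₁), fun x => ?_⟩
  have hw := expWeight_pos a b x
  suffices min (ρ x₀) (c₁ / 2 ^ |a|) ≤ ρ x ∧ ρ x ≤ max (ρ x₁) (c₂ * 2 ^ |a|) by
    rwa [le_div_iff₀ hw, div_le_iff₀ hw] at this
  rcases le_or_gt ‖x‖ 1 with hx | hx
  · have hx' : x ∈ Metric.closedBall (0 : E) 1 := mem_closedBall_zero_iff.2 hx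
    exact ⟨min_le_of_left_le (hmin hx'), le_max_of_le_left (hmax hx')⟩
  obtain ⟨hlow, hup⟩ := hbound x hx.le
  refine ⟨min_le_of_right_le ?_, le_max_of_le_right ?_⟩
  · rw [le_div_iff₀ hw, div_mul_eq_mul_div, div_le_iff₀ (by positivity)]
    calc c₁ * expWeight a b x ≤ c₁ * (2 ^ |a| * (‖x‖ ^ a * exp (-b * ‖x‖))) := by
          gcongr; exact expWeight_le_two_rpow_mul hx.le a b
      _ = c₁ * ‖x‖ ^ a * exp (-b * ‖x‖) * 2 ^ |a| := by ring
      _ ≤ v x * 2 ^ |a| := by gcongr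
  · rw [div_le_iff₀ hw]
    calc v x ≤ c₂ * (‖x‖ ^ a * exp (-b * ‖x‖)) := by rw [← mul_assoc]; exact hup
      _ ≤ c₂ * (2 ^ |a| * expWeight a b x) := by
          gcongr c₂ * ?_; exact rpow_mul_exp_le_two_rpow_mul_expWeight hx.le a b
      _ = c₂ * 2 ^ |a| * expWeight a b x := by ring

end expWeight

section FiniteDimensional

variable {E : Type*} [NormedAddCommGroup E] [NormedSpace ℝ E] [FiniteDimensional ℝ E]
  [MeasurableSpace E] [BorelSpace E] (μ : Measure E) [μ.IsAddHaarMeasure] {f g : E → ℝ}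
  {a a' b b' : ℝ}

theorem integrable_expWeight (s : ℝ) {β : ℝ} (hβ : 0 < β) : Integrable (expWeight s β) μ := by
  set r : ℝ := Module.finrank ℝ E + 1
  set K := (⌈s + r⌉₊).factorial * exp β / β ^ ⌈s + r⌉₊
  refine ((integrable_one_add_norm (μ := μ) (lt_add_one _)).const_mul K).mono'
    (continuous_expWeight s β).aestronglyMeasurable (ae_of_all _ fun x => ?_)
  have h1 : (0 : ℝ) < 1 + ‖x‖ := by positivity
  rw [norm_of_nonneg (expWeight_pos s β x).le]
  calc expWeight s β x = (1 + ‖x‖) ^ (s + r) * exp (-β * ‖x‖) * (1 + ‖x‖) ^ (-r) := by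
        rw [expWeight, mul_right_comm, ← rpow_add h1, add_neg_cancel_right]
    _ ≤ K * (1 + ‖x‖) ^ (-r) := by
        gcongr; exact one_add_rpow_mul_exp_neg_le hβ _ (norm_nonneg x)

theorem integral_expWeight_pos (s : ℝ) {β : ℝ} (hβ : 0 < β) : 0 < ∫ x, expWeight s β x ∂μ :=
  integral_pos_of_integrable_nonneg_nonzero (x := 0) (continuous_expWeight s β)
    (integrable_expWeight μ s hβ) (fun x => (expWeight_pos s β x).le) (expWeight_pos s β 0).ne'

theorem integral_comp_sub_mul_le {U U' : ℝ} (hb : 0 ≤ b) (hbb' : b < b') (hU : 0 ≤ U)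
    (hf0 : ∀ x, 0 ≤ f x) (hg0 : ∀ x, 0 ≤ g x) (hf : ∀ x, f x ≤ U * expWeight a b x)
    (hg : ∀ x, g x ≤ U' * expWeight a' b' x) (ξ : E) :
    ∫ x, f (x - ξ) * g x ∂μ ≤
      U * U' * (∫ x, expWeight (|a| + a') (-b + b') x ∂μ) * expWeight a b ξ := by
  rw [← integral_const_mul, ← smul_eq_mul, ← integral_smul_const]
  refine integral_mono_of_nonneg (ae_of_all _ fun x => mul_nonneg (hf0 _) (hg0 x))
    (((integrable_expWeight μ _ (by linarith)).const_mul _).smul_const _) (ae_of_all _ fun x => ?_)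
  calc f (x - ξ) * g x ≤ (U * expWeight a b (x - ξ)) * (U' * expWeight a' b' x) :=
        mul_le_mul (hf _) (hg x) (hg0 x) ((hf0 _).trans (hf _))
    _ ≤ (U * (expWeight a b ξ * expWeight |a| (-b) x)) * (U' * expWeight a' b' x) :=
        mul_le_mul_of_nonneg_right (mul_le_mul_of_nonneg_left (expWeight_sub_le hb a x ξ) hU)
          ((hg0 x).trans (hg x))
    _ = U * U' * expWeight (|a| + a') (-b + b') x * expWeight a b ξ := by
        rw [← expWeight_mul_expWeight]; ring

theorem le_integral_comp_sub_mul {L L' : ℝ} (hb : 0 ≤ b) (hb' : 0 < b') (hL : 0 ≤ L)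
    (hL' : 0 ≤ L') (hf : ∀ x, L * expWeight a b x ≤ f x) (hg : ∀ x, L' * expWeight a' b' x ≤ g x)
    {ξ : E} (hint : Integrable (fun x => f (x - ξ) * g x) μ) :
    L * L' * (∫ x, expWeight (-|a| + a') (b + b') x ∂μ) * expWeight a b ξ ≤
      ∫ x, f (x - ξ) * g x ∂μ := by
  rw [← integral_const_mul, ← smul_eq_mul, ← integral_smul_const]
  refine integral_mono
    (((integrable_expWeight μ _ (by linarith)).const_mul _).smul_const _) hint fun x => ?_
  calc (L * L' * expWeight (-|a| + a') (b + b') x) • expWeight a b ξ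
      = (L * (expWeight a b ξ * expWeight (-|a|) b x)) * (L' * expWeight a' b' x) := by
        rw [smul_eq_mul, ← expWeight_mul_expWeight]; ring
    _ ≤ (L * expWeight a b (x - ξ)) * (L' * expWeight a' b' x) :=
        mul_le_mul_of_nonneg_right (mul_le_mul_of_nonneg_left (le_expWeight_sub hb a x ξ) hL)
          (mul_nonneg hL' (expWeight_pos a' b' x).le)
    _ ≤ f (x - ξ) * g x :=
        mul_le_mul (hf _) (hg x) (mul_nonneg hL' (expWeight_pos a' b' x).le)
          ((mul_nonneg hL (expWeight_pos a b _).le).trans (hf _))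

end FiniteDimensional

theorem statement4_general (n : ℕ) (a a' b b' : ℝ) (hb : 0 < b) (hbb' : b < b')
    (u u' : EuclideanSpace ℝ (Fin n) → ℝ)
    (hupos : ∀ x, 0 < u x) (hu'pos : ∀ x, 0 < u' x)
    (hucont : Continuous u) (hu'cont : Continuous u')
    (c₁ c₂ : ℝ) (hc₁ : 0 < c₁) (hc : c₁ ≤ c₂)
    (hub : ∀ x : EuclideanSpace ℝ (Fin n), 1 ≤ ‖x‖ →
      c₁ * ‖x‖ ^ a * Real.exp (-b * ‖x‖) ≤ u x ∧ u x ≤ c₂ * ‖x‖ ^ a * Real.exp (-b * ‖x‖))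
    (hu'b : ∀ x : EuclideanSpace ℝ (Fin n), 1 ≤ ‖x‖ →
      c₁ * ‖x‖ ^ a' * Real.exp (-b' * ‖x‖) ≤ u' x ∧
        u' x ≤ c₂ * ‖x‖ ^ a' * Real.exp (-b' * ‖x‖))
    (hint : ∀ ξ : EuclideanSpace ℝ (Fin n), Integrable fun x => u (x - ξ) * u' x) :
    ∃ C₁ C₂ R : ℝ, 0 < C₁ ∧ C₁ ≤ C₂ ∧ 0 < R ∧
      ∀ ξ : EuclideanSpace ℝ (Fin n), R ≤ ‖ξ‖ →
        C₁ * Real.exp (-b * ‖ξ‖) * ‖ξ‖ ^ a ≤ (∫ x, u (x - ξ) * u' x) ∧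
        (∫ x, u (x - ξ) * u' x) ≤ C₂ * Real.exp (-b * ‖ξ‖) * ‖ξ‖ ^ a := by
  have hc₂ : 0 ≤ c₂ := hc₁.le.trans hc
  obtain ⟨L, U, hL, hU, hu⟩ := exists_forall_mul_expWeight_le_and_le hucont hupos hc₁ hc₂ hub
  obtain ⟨L', U', hL', hU', hu'⟩ :=
    exists_forall_mul_expWeight_le_and_le hu'cont hu'pos hc₁ hc₂ hu'b
  set I₁ := ∫ x : EuclideanSpace ℝ (Fin n), expWeight (-|a| + a') (b + b') x
  set I₂ := ∫ x : EuclideanSpace ℝ (Fin n), expWeight (|a| + a') (-b + b') x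
  have hI₁ : 0 < I₁ := integral_expWeight_pos volume _ (by linarith)
  have hI₂ : 0 < I₂ := integral_expWeight_pos volume _ (by linarith)
  set C₁ := L * L' * I₁ / 2 ^ |a|
  refine ⟨C₁, max C₁ (U * U' * I₂ * 2 ^ |a|), 1, by positivity, le_max_left _ _, one_pos,
    fun ξ hξ => ⟨?_, ?_⟩⟩
  · calc C₁ * exp (-b * ‖ξ‖) * ‖ξ‖ ^ a
          = L * L' * I₁ * ((‖ξ‖ ^ a * exp (-b * ‖ξ‖)) / 2 ^ |a|) := by ring
      _ ≤ L * L' * I₁ * expWeight a b ξ := by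
          gcongr
          rw [div_le_iff₀' (by positivity)]
          exact rpow_mul_exp_le_two_rpow_mul_expWeight hξ a b
      _ ≤ ∫ x, u (x - ξ) * u' x :=
          le_integral_comp_sub_mul volume hb.le (hb.trans hbb') hL.le hL'.le (fun x => (hu x).1)
            (fun x => (hu' x).1) (hint ξ)
  · calc ∫ x, u (x - ξ) * u' x ≤ U * U' * I₂ * expWeight a b ξ :=
          integral_comp_sub_mul_le volume hb.le hbb' hU.le (fun x => (hupos x).le)
            (fun x => (hu'pos x).le) (fun x => (hu x).2) (fun x => (hu' x).2) ξ
      _ ≤ U * U' * I₂ * (2 ^ |a| * (‖ξ‖ ^ a * exp (-b * ‖ξ‖))) := by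
          gcongr; exact expWeight_le_two_rpow_mul hξ a b
      _ = U * U' * I₂ * 2 ^ |a| * exp (-b * ‖ξ‖) * ‖ξ‖ ^ a := by ring
      _ ≤ max C₁ (U * U' * I₂ * 2 ^ |a|) * exp (-b * ‖ξ‖) * ‖ξ‖ ^ a := by
          gcongr; exact le_max_right _ _

theorem statement4 (n : ℕ) (hn : 1 ≤ n) (a a' b b' : ℝ) (hb : 0 < b) (hbb' : b < b')
    (u u' : EuclideanSpace ℝ (Fin n) → ℝ)
    (hupos : ∀ x, 0 < u x) (hu'pos : ∀ x, 0 < u' x)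
    (hucont : Continuous u) (hu'cont : Continuous u')
    (hurad : ∀ x y : EuclideanSpace ℝ (Fin n), ‖x‖ = ‖y‖ → u x = u y)
    (hu'rad : ∀ x y : EuclideanSpace ℝ (Fin n), ‖x‖ = ‖y‖ → u' x = u' y)
    (c₁ c₂ : ℝ) (hc₁ : 0 < c₁) (hc : c₁ ≤ c₂)
    (hub : ∀ x : EuclideanSpace ℝ (Fin n), 1 ≤ ‖x‖ →
      c₁ * ‖x‖ ^ a * Real.exp (-b * ‖x‖) ≤ u x ∧ u x ≤ c₂ * ‖x‖ ^ a * Real.exp (-b * ‖x‖))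
    (hu'b : ∀ x : EuclideanSpace ℝ (Fin n), 1 ≤ ‖x‖ →
      c₁ * ‖x‖ ^ a' * Real.exp (-b' * ‖x‖) ≤ u' x ∧
        u' x ≤ c₂ * ‖x‖ ^ a' * Real.exp (-b' * ‖x‖))
    (hint : ∀ ξ : EuclideanSpace ℝ (Fin n), Integrable fun x => u (x - ξ) * u' x) :
    ∃ C₁ C₂ R : ℝ, 0 < C₁ ∧ C₁ ≤ C₂ ∧ 0 < R ∧
      ∀ ξ : EuclideanSpace ℝ (Fin n), R ≤ ‖ξ‖ →
        C₁ * Real.exp (-b * ‖ξ‖) * ‖ξ‖ ^ a ≤ (∫ x, u (x - ξ) * u' x) ∧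
        (∫ x, u (x - ξ) * u' x) ≤ C₂ * Real.exp (-b * ‖ξ‖) * ‖ξ‖ ^ a :=
  statement4_general n a a' b b' hb hbb' u u' hupos hu'pos hucont hu'cont c₁ c₂ hc₁ hc hub hu'b hint
end

section
/- There exists C > 0 such that for all ε > 0 and all y_i, y_j ∈ ℝ³ with y_i ≠ y_j: ∫_{ℝ³} |∇w_{ε,y_i}(x) · ∇w_{ε,y_j}(x)| dx ≤ C ε e^{−η|y_i−y_j|/ε}, where w_{ε,y}(x) = w((x−y)/ε). -/
open MeasureTheory Real Filter

noncomputable section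

/-!
By the chain rule `∇w_{ε,y}(x) = ε⁻¹ (∇w)((x - y)/ε)`, so after the substitution `z = (x - yᵢ)/ε`
the integral is at most `C₀² ε ∫ P(|z|) P(|z - d|) dz`, where `P(r) = e^{-ηr}/(1 + r)` and
`d = (yⱼ - yᵢ)/ε`; it remains to bound this convolution by `K e^{-η|d|}`.

Rotate `d` to `(D, 0, 0)` and write `z = (t, v)` with `v ∈ ℝ²`, `r = |v|`. If
`m = min(|t|, |t - D|)`, then `|z| + |z - d| ≥ |t| + |t - D| + r²/(2m + r)`, and
`e^{-η r²/(2m + r)} ≤ e^{-ηr/2} + e^{-η r²/(4(m + 1))}` has `v`-integral `O(1 + m)`. The factor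
`1 + m` cancels against `(1 + |t|)(1 + |t - D|) = (1 + m)(1 + max(|t|, |t - D|))`, leaving
`(1 + D/2)⁻¹ ∫ e^{-η(|t| + |t - D|)} dt ≤ (1 + D/2)⁻¹ (D + 2/η) e^{-ηD}`: the polynomial decay of
`P` is exactly what absorbs the length `D` of the segment on which `|t| + |t - D|` is minimal.
-/

open scoped ENNReal

def decayProfile (η r : ℝ) : ℝ := (1 + r)⁻¹ * Real.exp (-η * r)

lemma continuous_decayProfile_norm {E : Type*} [SeminormedAddCommGroup E] (η : ℝ) :
    Continuous fun z : E => decayProfile η ‖z‖ := by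
  have hpos (z : E) : 1 + ‖z‖ ≠ 0 := by positivity
  unfold decayProfile
  exact ((continuous_const.add continuous_norm).inv₀ hpos).mul (by fun_prop)

lemma integrable_exp_neg_mul_abs {c : ℝ} (hc : 0 < c) :
    Integrable fun t : ℝ => Real.exp (-c * |t|) := by
  have hIoi : IntegrableOn (fun t : ℝ => Real.exp (-c * |t|)) (Set.Ioi 0) :=
    (exp_neg_integrableOn_Ioi 0 hc).congr_fun
      (fun t ht => by simp only [abs_of_pos (Set.mem_Ioi.mp ht), neg_mul]) measurableSet_Ioi
  have hIio : IntegrableOn (fun t : ℝ => Real.exp (-c * |t|)) (Set.Iio 0) := by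
    rw [← (Measure.measurePreserving_neg (volume : Measure ℝ)).integrableOn_comp_preimage
        (Homeomorph.neg ℝ).measurableEmbedding]
    simpa only [Function.comp_def, abs_neg, Set.neg_preimage, Set.neg_Iio, neg_zero] using hIoi
  rw [← integrableOn_univ, ← Set.Iio_union_Ici (a := (0 : ℝ)), integrableOn_union]
  exact ⟨hIio, (integrableOn_Ici_iff_integrableOn_Ioi).mpr hIoi⟩

lemma integral_exp_neg_mul_abs {c : ℝ} (hc : 0 < c) :
    ∫ t : ℝ, Real.exp (-c * |t|) = 2 / c := by
  rw [integral_comp_abs (f := fun t => Real.exp (-c * t))]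
  have h := integral_comp_mul_left_Ioi (fun u : ℝ => Real.exp (-u)) 0 hc
  simp only [mul_zero, smul_eq_mul, integral_exp_neg_Ioi_zero, mul_one] at h
  simp only [neg_mul, h, div_eq_mul_inv]

lemma exp_neg_abs_add_abs_sub_le {η D : ℝ} (hD : 0 ≤ D) (t : ℝ) :
    Real.exp (-η * (|t| + |t - D|)) ≤ Real.exp (-η * D) *
      (Set.indicator (Set.Icc 0 D) 1 t + Real.exp (-(2 * η) * |t|) +
        Real.exp (-(2 * η) * |t - D|)) := by
  have hi : 0 ≤ Set.indicator (Set.Icc 0 D) (1 : ℝ → ℝ) t :=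
    Set.indicator_nonneg (fun _ _ => zero_le_one) t
  have h₁ := (exp_pos (-(2 * η) * |t|)).le
  have h₂ := (exp_pos (-(2 * η) * |t - D|)).le
  rcases le_or_gt t 0 with ht | ht
  · have e : -η * (|t| + |t - D|) = -η * D + -(2 * η) * |t| := by
      rw [abs_of_nonpos ht, abs_of_nonpos (by linarith)]; ring
    rw [e, exp_add]; gcongr; linarith
  rcases le_or_gt t D with htD | htD
  · have e : |t| + |t - D| = D := by
      rw [abs_of_pos ht, abs_of_nonpos (by linarith)]; ring
    rw [e, Set.indicator_of_mem (Set.mem_Icc.mpr ⟨ht.le, htD⟩), Pi.one_apply]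
    exact le_mul_of_one_le_right (exp_pos _).le (by linarith)
  · have e : -η * (|t| + |t - D|) = -η * D + -(2 * η) * |t - D| := by
      rw [abs_of_pos ht, abs_of_pos (by linarith)]; ring
    rw [e, exp_add]; gcongr; linarith

lemma lintegral_exp_neg_abs_add_abs_sub_le {η D : ℝ} (hη : 0 < η) (hD : 0 ≤ D) :
    ∫⁻ t : ℝ, ENNReal.ofReal (Real.exp (-η * (|t| + |t - D|))) ≤
      ENNReal.ofReal ((D + 2 / η) * Real.exp (-η * D)) := by
  have h2η : 0 < 2 * η := by positivity
  have hind : Integrable (Set.indicator (Set.Icc 0 D) (1 : ℝ → ℝ)) :=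
    (integrableOn_const measure_Icc_lt_top.ne).integrable_indicator measurableSet_Icc
  have hexp := integrable_exp_neg_mul_abs h2η
  have hexpD := hexp.comp_sub_right D
  have hsum₁ : Integrable fun t => Set.indicator (Set.Icc 0 D) 1 t + Real.exp (-(2 * η) * |t|) :=
    hind.add hexp
  have hsum : Integrable fun t => Set.indicator (Set.Icc 0 D) 1 t + Real.exp (-(2 * η) * |t|) +
      Real.exp (-(2 * η) * |t - D|) := hsum₁.add hexpD
  calc ∫⁻ t : ℝ, ENNReal.ofReal (Real.exp (-η * (|t| + |t - D|)))
      ≤ ∫⁻ t : ℝ, ENNReal.ofReal (Real.exp (-η * D) *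
          (Set.indicator (Set.Icc 0 D) 1 t + Real.exp (-(2 * η) * |t|) +
            Real.exp (-(2 * η) * |t - D|))) :=
        lintegral_mono fun t => ENNReal.ofReal_le_ofReal (exp_neg_abs_add_abs_sub_le hD t)
    _ = ENNReal.ofReal (Real.exp (-η * D) * (D + 2 / (2 * η) + 2 / (2 * η))) := by
        rw [← ofReal_integral_eq_lintegral_ofReal (hsum.const_mul _)
            (ae_of_all _ fun t => (exp_pos _).le.trans (exp_neg_abs_add_abs_sub_le hD t)),
          integral_const_mul, integral_add hsum₁ hexpD, integral_add hind hexp,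
          integral_indicator_one measurableSet_Icc, Real.volume_real_Icc_of_le hD, sub_zero,
          integral_sub_right_eq_self (fun t => Real.exp (-(2 * η) * |t|)),
          integral_exp_neg_mul_abs h2η]
    _ = ENNReal.ofReal ((D + 2 / η) * Real.exp (-η * D)) := by
        congr 1; field_simp; ring

lemma sq_div_le_sqrt_add_sq_sub {m r : ℝ} (hm : 0 ≤ m) (hr : 0 ≤ r) :
    r ^ 2 / (2 * m + r) ≤ √(m ^ 2 + r ^ 2) - m := by
  set q := √(m ^ 2 + r ^ 2)
  have hq0 : 0 ≤ q := Real.sqrt_nonneg _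
  have hq : q ^ 2 = m ^ 2 + r ^ 2 := Real.sq_sqrt (by positivity)
  have hmq : m ≤ q := by nlinarith
  have hqm : q ≤ m + r := by nlinarith
  rcases (by positivity : (0 : ℝ) ≤ 2 * m + r).eq_or_lt with h | h
  · rw [← h, div_zero]; linarith
  · rw [div_le_iff₀ h]; nlinarith

lemma abs_add_abs_add_sq_div_le_sqrt_add_sqrt {x y r : ℝ} (hr : 0 ≤ r) :
    |x| + |y| + r ^ 2 / (2 * min |x| |y| + r) ≤ √(x ^ 2 + r ^ 2) + √(y ^ 2 + r ^ 2) := by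
  have hx := sq_div_le_sqrt_add_sq_sub (abs_nonneg x) hr
  have hy := sq_div_le_sqrt_add_sq_sub (abs_nonneg y) hr
  have hx' : |x| ≤ √(x ^ 2 + r ^ 2) := Real.abs_le_sqrt (by nlinarith)
  have hy' : |y| ≤ √(y ^ 2 + r ^ 2) := Real.abs_le_sqrt (by nlinarith)
  rw [sq_abs] at hx hy
  rcases le_total |x| |y| with h | h
  · rw [min_eq_left h]; linarith
  · rw [min_eq_right h]; linarith

lemma exp_neg_mul_sq_div_le {η m r : ℝ} (hη : 0 ≤ η) (hm : 0 ≤ m) (hr : 0 ≤ r) :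
    Real.exp (-η * (r ^ 2 / (2 * m + r))) ≤
      Real.exp (-(η / 2) * r) + Real.exp (-(η / (4 * (m + 1))) * r ^ 2) := by
  rcases le_or_gt (2 * m) r with h | h
  · have hle : r / 2 ≤ r ^ 2 / (2 * m + r) := by
      rcases hr.eq_or_lt with rfl | hr'
      · simp
      · rw [le_div_iff₀ (by linarith)]; nlinarith
    have := exp_le_exp.mpr (by nlinarith : -η * (r ^ 2 / (2 * m + r)) ≤ -(η / 2) * r)
    linarith [exp_pos (-(η / (4 * (m + 1))) * r ^ 2)]
  · have hle : r ^ 2 / (4 * (m + 1)) ≤ r ^ 2 / (2 * m + r) :=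
      div_le_div_of_nonneg_left (sq_nonneg r) (by linarith) (by linarith)
    have := exp_le_exp.mpr
      (by rw [neg_mul, neg_mul, div_mul_eq_mul_div, mul_div_assoc]; nlinarith :
        -η * (r ^ 2 / (2 * m + r)) ≤ -(η / (4 * (m + 1))) * r ^ 2)
    linarith [exp_pos (-(η / 2) * r)]

def axialWeight (η D t : ℝ) : ℝ :=
  Real.exp (-η * (|t| + |t - D|)) / ((1 + |t|) * (1 + |t - D|))

def transverseWeight (η m : ℝ) (v : ℝ × ℝ) : ℝ :=
  Real.exp (-(η / 4) * |v.1|) * Real.exp (-(η / 4) * |v.2|) +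
    Real.exp (-(η / (4 * (m + 1))) * v.1 ^ 2) * Real.exp (-(η / (4 * (m + 1))) * v.2 ^ 2)

lemma axialWeight_nonneg (η D t : ℝ) : 0 ≤ axialWeight η D t := by
  unfold axialWeight; positivity

lemma exp_neg_mul_sqrt_add_sqrt_le {η : ℝ} (hη : 0 ≤ η) (D t : ℝ) (v : ℝ × ℝ) :
    Real.exp (-η * (√(t ^ 2 + (v.1 ^ 2 + v.2 ^ 2)) + √((t - D) ^ 2 + (v.1 ^ 2 + v.2 ^ 2)))) ≤
      Real.exp (-η * (|t| + |t - D|)) * transverseWeight η (min |t| |t - D|) v := by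
  set r := √(v.1 ^ 2 + v.2 ^ 2)
  have hr : 0 ≤ r := Real.sqrt_nonneg _
  have hr2 : r ^ 2 = v.1 ^ 2 + v.2 ^ 2 := Real.sq_sqrt (by positivity)
  have hm : 0 ≤ min |t| |t - D| := le_min (abs_nonneg _) (abs_nonneg _)
  have hsum : |t| + |t - D| + r ^ 2 / (2 * min |t| |t - D| + r) ≤
      √(t ^ 2 + (v.1 ^ 2 + v.2 ^ 2)) + √((t - D) ^ 2 + (v.1 ^ 2 + v.2 ^ 2)) := by
    simpa only [hr2] using abs_add_abs_add_sq_div_le_sqrt_add_sqrt (x := t) (y := t - D) hr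
  have hv : (|v.1| + |v.2|) / 2 ≤ r :=
    Real.le_sqrt_of_sq_le (by nlinarith [sq_abs v.1, sq_abs v.2, sq_nonneg (|v.1| - |v.2|)])
  calc _ ≤ Real.exp (-η * (|t| + |t - D|)) *
          Real.exp (-η * (r ^ 2 / (2 * min |t| |t - D| + r))) := by
        rw [← exp_add]; gcongr; nlinarith
    _ ≤ Real.exp (-η * (|t| + |t - D|)) * (Real.exp (-(η / 2) * r) +
          Real.exp (-(η / (4 * (min |t| |t - D| + 1))) * r ^ 2)) := by
        gcongr; exact exp_neg_mul_sq_div_le hη hm hr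
    _ ≤ Real.exp (-η * (|t| + |t - D|)) * transverseWeight η (min |t| |t - D|) v := by
        unfold transverseWeight
        rw [← exp_add, ← exp_add, hr2]
        gcongr
        · nlinarith
        · exact le_of_eq (by ring)

lemma decayProfile_mul_decayProfile_le {η : ℝ} (hη : 0 ≤ η) (D t : ℝ) (v : ℝ × ℝ) :
    decayProfile η √(t ^ 2 + (v.1 ^ 2 + v.2 ^ 2)) *
        decayProfile η √((t - D) ^ 2 + (v.1 ^ 2 + v.2 ^ 2)) ≤
      axialWeight η D t * transverseWeight η (min |t| |t - D|) v := by
  set a := √(t ^ 2 + (v.1 ^ 2 + v.2 ^ 2))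
  set b := √((t - D) ^ 2 + (v.1 ^ 2 + v.2 ^ 2))
  have ha : |t| ≤ a := Real.abs_le_sqrt (by nlinarith)
  have hb : |t - D| ≤ b := Real.abs_le_sqrt (by nlinarith)
  unfold decayProfile axialWeight
  calc (1 + a)⁻¹ * Real.exp (-η * a) * ((1 + b)⁻¹ * Real.exp (-η * b))
      = Real.exp (-η * (a + b)) / ((1 + a) * (1 + b)) := by
        rw [mul_add, exp_add]; field_simp
    _ ≤ Real.exp (-η * (a + b)) / ((1 + |t|) * (1 + |t - D|)) := by gcongr
    _ ≤ Real.exp (-η * (|t| + |t - D|)) * transverseWeight η (min |t| |t - D|) v /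
          ((1 + |t|) * (1 + |t - D|)) := by
        gcongr; exact exp_neg_mul_sqrt_add_sqrt_le hη D t v
    _ = _ := by ring

lemma lintegral_transverseWeight_le {η m : ℝ} (hη : 0 < η) (hm : 0 ≤ m) :
    ∫⁻ v : ℝ × ℝ, ENNReal.ofReal (transverseWeight η m v) ≤
      ENNReal.ofReal ((64 / η ^ 2 + 4 * π / η) * (1 + m)) := by
  have hc : 0 < η / 4 := by positivity
  have hb : 0 < η / (4 * (m + 1)) := by positivity
  have hexp := integrable_exp_neg_mul_abs hc
  have hgauss := integrable_exp_neg_mul_sq hb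
  rw [← ofReal_integral_eq_lintegral_ofReal
      (by rw [Measure.volume_eq_prod]; exact (hexp.mul_prod hexp).add (hgauss.mul_prod hgauss))
      (ae_of_all _ fun v => by unfold transverseWeight; positivity)]
  refine ENNReal.ofReal_le_ofReal ?_
  unfold transverseWeight
  rw [Measure.volume_eq_prod, integral_add (hexp.mul_prod hexp) (hgauss.mul_prod hgauss),
    integral_prod_mul (fun t => Real.exp (-(η / 4) * |t|)) (fun t => Real.exp (-(η / 4) * |t|)),
    integral_prod_mul (fun t => Real.exp (-(η / (4 * (m + 1))) * t ^ 2))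
      (fun t => Real.exp (-(η / (4 * (m + 1))) * t ^ 2)),
    integral_exp_neg_mul_abs hc, integral_gaussian, Real.mul_self_sqrt (by positivity)]
  have e : 2 / (η / 4) * (2 / (η / 4)) + π / (η / (4 * (m + 1))) =
      64 / η ^ 2 + 4 * π / η * (1 + m) := by field_simp; ring
  rw [e]
  nlinarith [mul_nonneg (by positivity : (0 : ℝ) ≤ 64 / η ^ 2) hm]

lemma axialWeight_mul_le {η D : ℝ} (hD : 0 ≤ D) (t : ℝ) :
    axialWeight η D t * (1 + min |t| |t - D|) ≤
      2 / (2 + D) * Real.exp (-η * (|t| + |t - D|)) := by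
  have hDt : D ≤ |t| + |t - D| := by simpa [abs_of_nonneg hD] using abs_sub t (t - D)
  have hfrac : (1 + min |t| |t - D|) / ((1 + |t|) * (1 + |t - D|)) ≤ 2 / (2 + D) := by
    rw [div_le_div_iff₀ (by positivity) (by positivity)]
    rcases le_total |t| |t - D| with h | h
    · rw [min_eq_left h]; nlinarith [abs_nonneg t]
    · rw [min_eq_right h]; nlinarith [abs_nonneg (t - D)]
  unfold axialWeight
  calc Real.exp (-η * (|t| + |t - D|)) / ((1 + |t|) * (1 + |t - D|)) * (1 + min |t| |t - D|)
      = (1 + min |t| |t - D|) / ((1 + |t|) * (1 + |t - D|)) *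
          Real.exp (-η * (|t| + |t - D|)) := by ring
    _ ≤ 2 / (2 + D) * Real.exp (-η * (|t| + |t - D|)) := by gcongr

lemma lintegral_axialWeight_mul_le {η D K : ℝ} (hη : 0 < η) (hD : 0 ≤ D) (hK : 0 ≤ K) :
    ∫⁻ t, ENNReal.ofReal (axialWeight η D t * (K * (1 + min |t| |t - D|))) ≤
      ENNReal.ofReal (K * (2 + 2 / η) * Real.exp (-η * D)) := by
  have hfrac : 2 / (2 + D) * (D + 2 / η) ≤ 2 + 2 / η := by
    rw [div_mul_eq_mul_div, div_le_iff₀ (by positivity)]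
    have : 0 ≤ 2 / η := by positivity
    nlinarith
  calc ∫⁻ t, ENNReal.ofReal (axialWeight η D t * (K * (1 + min |t| |t - D|)))
      ≤ ∫⁻ t, ENNReal.ofReal (K * (2 / (2 + D))) *
          ENNReal.ofReal (Real.exp (-η * (|t| + |t - D|))) := by
        refine lintegral_mono fun t => ?_
        rw [← ENNReal.ofReal_mul (by positivity)]
        refine ENNReal.ofReal_le_ofReal ?_
        calc axialWeight η D t * (K * (1 + min |t| |t - D|))
            = K * (axialWeight η D t * (1 + min |t| |t - D|)) := by ring
          _ ≤ K * (2 / (2 + D) * Real.exp (-η * (|t| + |t - D|))) :=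
              mul_le_mul_of_nonneg_left (axialWeight_mul_le hD t) hK
          _ = _ := by ring
    _ = ENNReal.ofReal (K * (2 / (2 + D))) *
          ∫⁻ t, ENNReal.ofReal (Real.exp (-η * (|t| + |t - D|))) :=
        lintegral_const_mul' _ _ ENNReal.ofReal_ne_top
    _ ≤ ENNReal.ofReal (K * (2 / (2 + D))) *
          ENNReal.ofReal ((D + 2 / η) * Real.exp (-η * D)) := by
        gcongr; exact lintegral_exp_neg_abs_add_abs_sub_le hη hD
    _ ≤ ENNReal.ofReal (K * (2 + 2 / η) * Real.exp (-η * D)) := by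
        rw [← ENNReal.ofReal_mul (by positivity)]
        refine ENNReal.ofReal_le_ofReal ?_
        calc K * (2 / (2 + D)) * ((D + 2 / η) * Real.exp (-η * D))
            = K * (2 / (2 + D) * (D + 2 / η)) * Real.exp (-η * D) := by ring
          _ ≤ K * (2 + 2 / η) * Real.exp (-η * D) := by gcongr

lemma lintegral_axialWeight_mul_transverseWeight_le {η D : ℝ} (hη : 0 < η) (hD : 0 ≤ D) :
    ∫⁻ p : ℝ × ℝ × ℝ,
        ENNReal.ofReal (axialWeight η D p.1 * transverseWeight η (min |p.1| |p.1 - D|) p.2) ≤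
      ENNReal.ofReal ((64 / η ^ 2 + 4 * π / η) * (2 + 2 / η) * Real.exp (-η * D)) := by
  set K := 64 / η ^ 2 + 4 * π / η
  rw [Measure.volume_eq_prod]
  calc ∫⁻ p : ℝ × ℝ × ℝ, ENNReal.ofReal
          (axialWeight η D p.1 * transverseWeight η (min |p.1| |p.1 - D|) p.2) ∂volume.prod volume
      ≤ ∫⁻ t, ∫⁻ v, ENNReal.ofReal
          (axialWeight η D t * transverseWeight η (min |t| |t - D|) v) := lintegral_prod_le _
    _ = ∫⁻ t, ENNReal.ofReal (axialWeight η D t) *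
          ∫⁻ v, ENNReal.ofReal (transverseWeight η (min |t| |t - D|) v) := by
        simp_rw [ENNReal.ofReal_mul (axialWeight_nonneg η D _)]
        exact lintegral_congr fun t => lintegral_const_mul' _ _ ENNReal.ofReal_ne_top
    _ ≤ ∫⁻ t, ENNReal.ofReal (axialWeight η D t * (K * (1 + min |t| |t - D|))) := by
        gcongr with t
        rw [ENNReal.ofReal_mul (axialWeight_nonneg η D t)]
        gcongr
        exact lintegral_transverseWeight_le hη (le_min (abs_nonneg _) (abs_nonneg _))
    _ ≤ _ := lintegral_axialWeight_mul_le hη hD (by positivity)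

lemma lintegral_comp_norm_norm_sub_eq {E : Type*} [NormedAddCommGroup E] [InnerProductSpace ℝ E]
    [FiniteDimensional ℝ E] [MeasurableSpace E] [BorelSpace E] (G : ℝ → ℝ → ℝ≥0∞) {u d : E}
    (h : ‖u‖ = ‖d‖) :
    ∫⁻ z, G ‖z‖ ‖z - d‖ = ∫⁻ z, G ‖z‖ ‖z - u‖ := by
  set R := (ℝ ∙ (u - d))ᗮ.reflection
  have hRu : R u = d := Submodule.reflection_sub h
  rw [← R.measurePreserving.lintegral_comp_emb R.toMeasurableEquiv.measurableEmbedding]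
  refine lintegral_congr fun z => ?_
  rw [← hRu, ← map_sub, R.norm_map, R.norm_map]

lemma lintegral_euclideanSpace_fin_three (G : E3 → ℝ≥0∞) :
    ∫⁻ z, G z = ∫⁻ p : ℝ × ℝ × ℝ, G !₂[p.1, p.2.1, p.2.2] := by
  let e : ℝ × ℝ × ℝ ≃ᵐ E3 :=
    ((MeasurableEquiv.refl ℝ).prodCongr MeasurableEquiv.finTwoArrow.symm).trans
      ((MeasurableEquiv.piFinSuccAbove (fun _ : Fin 3 => ℝ) 0).symm.trans
        (MeasurableEquiv.toLp 2 _))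
  have he : MeasurePreserving e :=
    (EuclideanSpace.volume_preserving_symm_measurableEquiv_toLp (Fin 3)).symm.comp
      ((measurePreserving_piFinSuccAbove (fun _ : Fin 3 => (volume : Measure ℝ)) 0).symm.comp
        ((MeasurePreserving.id (volume : Measure ℝ)).prod (volume_preserving_finTwoArrow ℝ).symm))
  rw [← he.lintegral_comp_emb e.measurableEmbedding]
  refine lintegral_congr fun p => congrArg G ?_
  ext i; fin_cases i <;> rfl

lemma norm_euclideanSpace_fin_three (a b c : ℝ) :
    ‖(!₂[a, b, c] : E3)‖ = √(a ^ 2 + (b ^ 2 + c ^ 2)) := by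
  simp [EuclideanSpace.norm_eq, Fin.sum_univ_three, add_assoc]

lemma lintegral_decayProfile_mul_le {η : ℝ} (hη : 0 < η) (d : E3) :
    ∫⁻ z : E3, ENNReal.ofReal (decayProfile η ‖z‖ * decayProfile η ‖z - d‖) ≤
      ENNReal.ofReal ((64 / η ^ 2 + 4 * π / η) * (2 + 2 / η) * Real.exp (-η * ‖d‖)) := by
  have hu : ‖(!₂[‖d‖, 0, 0] : E3)‖ = ‖d‖ := by simp [norm_euclideanSpace_fin_three]
  rw [lintegral_comp_norm_norm_sub_eq
      (fun a b => ENNReal.ofReal (decayProfile η a * decayProfile η b)) hu,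
    lintegral_euclideanSpace_fin_three]
  refine le_trans (lintegral_mono fun p => ?_)
    (lintegral_axialWeight_mul_transverseWeight_le hη (norm_nonneg d))
  have hsub : (!₂[p.1, p.2.1, p.2.2] : E3) - !₂[‖d‖, 0, 0] = !₂[p.1 - ‖d‖, p.2.1, p.2.2] := by
    ext i; fin_cases i <;> simp
  rw [hsub, norm_euclideanSpace_fin_three, norm_euclideanSpace_fin_three]
  exact ENNReal.ofReal_le_ofReal (decayProfile_mul_decayProfile_le hη.le ‖d‖ p.1 p.2)

lemma integrable_and_integral_le_of_lintegral_le {α : Type*} [MeasurableSpace α]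
    {μ : Measure α} {f : α → ℝ} {B : ℝ} (hf : AEStronglyMeasurable f μ) (hf₀ : 0 ≤ᵐ[μ] f)
    (hB : 0 ≤ B) (h : ∫⁻ x, ENNReal.ofReal (f x) ∂μ ≤ ENNReal.ofReal B) :
    Integrable f μ ∧ ∫ x, f x ∂μ ≤ B := by
  refine ⟨⟨hf, (hasFiniteIntegral_iff_ofReal hf₀).mpr (h.trans_lt ENNReal.ofReal_lt_top)⟩, ?_⟩
  rw [integral_eq_lintegral_of_nonneg_ae hf₀ hf]
  exact ENNReal.toReal_le_of_le_ofReal hB h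

lemma integrable_decayProfile_mul_and_integral_le {η : ℝ} (hη : 0 < η) (d : E3) :
    Integrable (fun z : E3 => decayProfile η ‖z‖ * decayProfile η ‖z - d‖) ∧
      ∫ z : E3, decayProfile η ‖z‖ * decayProfile η ‖z - d‖ ≤
        (64 / η ^ 2 + 4 * π / η) * (2 + 2 / η) * Real.exp (-η * ‖d‖) := by
  refine integrable_and_integral_le_of_lintegral_le ?_ (ae_of_all _ fun z => ?_) (by positivity)
    (lintegral_decayProfile_mul_le hη d)
  · exact ((continuous_decayProfile_norm η).mul
      ((continuous_decayProfile_norm η).comp (continuous_sub_right d))).aestronglyMeasurable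
  · unfold decayProfile; positivity

lemma integral_comp_inv_smul_sub {E G : Type*} [NormedAddCommGroup E] [NormedSpace ℝ E]
    [MeasurableSpace E] [BorelSpace E] [FiniteDimensional ℝ E] (μ : Measure E)
    [μ.IsAddHaarMeasure] [NormedAddCommGroup G] [NormedSpace ℝ G] (f : E → G) {R : ℝ}
    (hR : 0 ≤ R) (y : E) :
    ∫ x, f (R⁻¹ • (x - y)) ∂μ = R ^ Module.finrank ℝ E • ∫ x, f x ∂μ := by
  rw [integral_sub_right_eq_self (fun x => f (R⁻¹ • x)) y,
    Measure.integral_comp_inv_smul_of_nonneg μ f hR]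

section Rescaling

variable {F : Type*} [NormedAddCommGroup F] [InnerProductSpace ℝ F] [CompleteSpace F]

lemma gradient_comp_smul_sub (f : F → ℝ) (c : ℝ) (y x : F) :
    gradient (fun z => f (c • (z - y))) x = c • gradient f (c • (x - y)) := by
  simp only [gradient]
  rw [fderiv_comp_sub (f := fun u => f (c • u)), fderiv_comp_smul, map_smul]

lemma abs_inner_gradient_comp_smul_sub_le {f : F → ℝ} {B : F → ℝ}
    (hB : ∀ x, ‖gradient f x‖ ≤ B x) (c : ℝ) (y₁ y₂ x : F) :
    |inner ℝ (gradient (fun z => f (c • (z - y₁))) x)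
        (gradient (fun z => f (c • (z - y₂))) x)| ≤
      c ^ 2 * (B (c • (x - y₁)) * B (c • (x - y₂))) := by
  rw [gradient_comp_smul_sub, gradient_comp_smul_sub]
  calc _ ≤ ‖c • gradient f (c • (x - y₁))‖ * ‖c • gradient f (c • (x - y₂))‖ :=
        abs_real_inner_le_norm _ _
    _ = c ^ 2 * (‖gradient f (c • (x - y₁))‖ * ‖gradient f (c • (x - y₂))‖) := by
        rw [norm_smul, norm_smul, Real.norm_eq_abs, ← sq_abs c]; ring
    _ ≤ c ^ 2 * (B (c • (x - y₁)) * B (c • (x - y₂))) := by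
        gcongr
        exacts [(norm_nonneg _).trans (hB _), hB _, hB _]

end Rescaling

theorem statement7_general (η C₀ : ℝ) (hη : 0 < η) (hC₀ : 0 < C₀)
    (w : E3 → ℝ)
    (hwdecay : ∀ x, ‖gradient w x‖ ≤ C₀ * (1 + ‖x‖)⁻¹ * Real.exp (-η * ‖x‖)) :
    ∃ C > 0, ∀ ε > (0 : ℝ), ∀ yi yj : E3, yi ≠ yj →
      (∫ x : E3, |(inner ℝ (gradient (fun z => w (ε⁻¹ • (z - yi))) x)
          (gradient (fun z => w (ε⁻¹ • (z - yj))) x) : ℝ)|)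
        ≤ C * ε * Real.exp (-η * ‖yi - yj‖ / ε) := by
  set K := (64 / η ^ 2 + 4 * π / η) * (2 + 2 / η)
  refine ⟨C₀ ^ 2 * K, by positivity, fun ε hε yi yj _ => ?_⟩
  set d : E3 := ε⁻¹ • (yj - yi)
  set g : E3 → ℝ := fun z => decayProfile η ‖z‖ * decayProfile η ‖z - d‖
  obtain ⟨hg, hg_le⟩ := integrable_decayProfile_mul_and_integral_le hη d
  have hdecay (x : E3) : ‖gradient w x‖ ≤ C₀ * decayProfile η ‖x‖ := by
    simpa only [decayProfile, mul_assoc] using hwdecay x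
  have hpointwise (x : E3) :
      |inner ℝ (gradient (fun z => w (ε⁻¹ • (z - yi))) x)
          (gradient (fun z => w (ε⁻¹ • (z - yj))) x)| ≤
        (C₀ * ε⁻¹) ^ 2 * g (ε⁻¹ • (x - yi)) := by
    have hx : ε⁻¹ • (x - yj) = ε⁻¹ • (x - yi) - d := by
      simp only [d, ← smul_sub]; congr 1; abel
    refine (abs_inner_gradient_comp_smul_sub_le hdecay ε⁻¹ yi yj x).trans_eq ?_
    rw [hx]; ring
  have hd : ‖d‖ = ‖yi - yj‖ / ε := by
    rw [norm_smul, norm_inv, Real.norm_of_nonneg hε.le, norm_sub_rev, inv_mul_eq_div]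
  calc _ ≤ ∫ x, (C₀ * ε⁻¹) ^ 2 * g (ε⁻¹ • (x - yi)) :=
        integral_mono_of_nonneg (ae_of_all _ fun _ => abs_nonneg _)
          (((hg.comp_smul (inv_ne_zero hε.ne')).comp_sub_right yi).const_mul _)
          (ae_of_all _ hpointwise)
    _ = (C₀ * ε⁻¹) ^ 2 * (ε ^ 3 * ∫ z, g z) := by
        rw [integral_const_mul, integral_comp_inv_smul_sub volume g hε.le,
          finrank_euclideanSpace_fin, smul_eq_mul]
    _ ≤ (C₀ * ε⁻¹) ^ 2 * (ε ^ 3 * (K * Real.exp (-η * ‖d‖))) := by gcongr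
    _ = C₀ ^ 2 * K * ε * Real.exp (-η * ‖yi - yj‖ / ε) := by
        rw [hd, mul_div_assoc]; field_simp

theorem statement7 (η C₀ : ℝ) (hη : 0 < η) (hC₀ : 0 < C₀)
    (w : E3 → ℝ) (hwC1 : ContDiff ℝ 1 w)
    (hwrad : ∀ x y : E3, ‖x‖ = ‖y‖ → w x = w y)
    (hwdecay : ∀ x, ‖gradient w x‖ ≤ C₀ * (1 + ‖x‖)⁻¹ * Real.exp (-η * ‖x‖)) :
    ∃ C > 0, ∀ ε > (0 : ℝ), ∀ yi yj : E3, yi ≠ yj →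
      (∫ x : E3, |(inner ℝ (gradient (fun z => w (ε⁻¹ • (z - yi))) x)
          (gradient (fun z => w (ε⁻¹ • (z - yj))) x) : ℝ)|)
        ≤ C * ε * Real.exp (-η * ‖yi - yj‖ / ε) :=
  statement7_general η C₀ hη hC₀ w hwdecay

end
end

section
/- For every q with 2 < q ≤ 3 there exists a constant C > 0 such that for all e, f ∈ ℝ: |(e+f)₊^q − e₊^q − q·e₊^{q−1}f − (q(q−1)/2)·e₊^{q−2}f²| ≤ C|f|^q, where t₊ = max(t, 0) and the term e₊^{q−2}f² is understood to be 0 when e ≤ 0. -/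
/-!
The expression is the second-order Taylor remainder at `e` of `φ t = t₊ ^ q`. Since `q > 2`,
`φ` is twice differentiable everywhere, with `φ' t = q t₊^(q-1)` and `φ'' t = q (q-1) t₊^(q-2)`
(Lean's `0 ^ (q - 2) = 0` is exactly the convention of the statement for `e ≤ 0`). Subadditivity
of `a ↦ a ^ α` for `α ≤ 1` makes `t ↦ t₊ ^ α` `α`-Hölder with constant `1`, so `φ''` is
`(q-2)`-Hölder, and two applications of the mean value inequality bound the remainder by
`q (q-1) |f| ^ q`.
-/

open Real Set Metric Filter Topology

lemma abs_rpow_sub_rpow_le_abs_sub_rpow {α a b : ℝ} (hα₀ : 0 ≤ α) (hα₁ : α ≤ 1) (ha : 0 ≤ a)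
    (hb : 0 ≤ b) : |a ^ α - b ^ α| ≤ |a - b| ^ α := by
  wlog hba : b ≤ a generalizing a b
  · rw [abs_sub_comm, abs_sub_comm a]
    exact this hb ha (le_of_not_ge hba)
  have hmono : b ^ α ≤ a ^ α := rpow_le_rpow hb hba hα₀
  have hsubadd : a ^ α ≤ (a - b) ^ α + b ^ α := by
    simpa using rpow_add_le_add_rpow (sub_nonneg.2 hba) hb hα₀ hα₁
  rw [abs_of_nonneg (sub_nonneg.2 hmono), abs_of_nonneg (sub_nonneg.2 hba)]
  linarith

lemma abs_max_zero_rpow_sub_max_zero_rpow_le {α : ℝ} (hα₀ : 0 ≤ α) (hα₁ : α ≤ 1) (s t : ℝ) :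
    |max s 0 ^ α - max t 0 ^ α| ≤ |s - t| ^ α :=
  (abs_rpow_sub_rpow_le_abs_sub_rpow hα₀ hα₁ (le_max_right _ _) (le_max_right _ _)).trans
    (rpow_le_rpow (abs_nonneg _) (abs_max_sub_max_le_abs s t 0) hα₀)

lemma hasDerivAt_max_zero_rpow {p : ℝ} (hp : 1 < p) (t : ℝ) :
    HasDerivAt (fun s => max s 0 ^ p) (p * max t 0 ^ (p - 1)) t := by
  have hp₀ : p ≠ 0 := by positivity
  have hp₁ : p - 1 ≠ 0 := by linarith
  rcases lt_trichotomy t 0 with ht | rfl | ht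
  · have hzero : (fun s => max s 0 ^ p) =ᶠ[𝓝 t] fun _ => 0 := by
      filter_upwards [Iio_mem_nhds ht] with s hs
      rw [max_eq_right hs.le, zero_rpow hp₀]
    rw [max_eq_right ht.le, zero_rpow hp₁, mul_zero]
    exact (hasDerivAt_const t 0).congr_of_eventuallyEq hzero
  · have hleft : HasDerivWithinAt (fun s : ℝ => max s 0 ^ p) 0 (Iic 0) 0 :=
      (hasDerivWithinAt_const (0 : ℝ) (Iic 0) (0 : ℝ)).congr
        (fun s hs => by rw [max_eq_right hs, zero_rpow hp₀]) (by rw [max_self, zero_rpow hp₀])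
    have hright : HasDerivWithinAt (fun s : ℝ => max s 0 ^ p) 0 (Ici 0) 0 := by
      have h := (hasDerivAt_rpow_const (p := p) (x := 0) (Or.inr hp.le)).hasDerivWithinAt
        (s := Ici 0)
      rw [zero_rpow (by linarith), mul_zero] at h
      exact h.congr (fun s hs => by rw [max_eq_left hs]) (by rw [max_self])
    rw [max_self, zero_rpow hp₁, mul_zero]
    simpa only [Iic_union_Ici, hasDerivWithinAt_univ] using hleft.union hright
  · have hpow : (fun s => max s 0 ^ p) =ᶠ[𝓝 t] fun s => s ^ p := by
      filter_upwards [Ioi_mem_nhds ht] with s hs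
      rw [max_eq_left hs.le]
    rw [max_eq_left ht.le]
    exact (hasDerivAt_rpow_const (Or.inl ht.ne')).congr_of_eventuallyEq hpow

lemma abs_sub_sub_deriv_mul_le_of_abs_deriv_sub_le {g g' : ℝ → ℝ} {e r M : ℝ}
    (hg : ∀ y, HasDerivAt g (g' y) y) (hM : ∀ y ∈ closedBall e r, |g' y - g' e| ≤ M)
    {y : ℝ} (hy : y ∈ closedBall e r) : |g y - g e - g' e * (y - e)| ≤ M * r := by
  have he : e ∈ closedBall e r := mem_closedBall_self (dist_nonneg.trans hy)
  have hM₀ : 0 ≤ M := by simpa using hM e he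
  have hlin := Convex.norm_image_sub_le_of_norm_hasDerivWithin_le
    (f := fun y => g y - g' e * y) (f' := fun y => g' y - g' e)
    (fun y _ => ((hg y).sub ((hasDerivAt_id y).const_mul (g' e))).hasDerivWithinAt.congr_deriv
      (by ring))
    hM (convex_closedBall e r) he hy
  rw [mem_closedBall, dist_eq] at hy
  simp only [norm_eq_abs] at hlin
  calc |g y - g e - g' e * (y - e)| = |g y - g' e * y - (g e - g' e * e)| := by
        congr 1; ring
    _ ≤ M * |y - e| := hlin
    _ ≤ M * r := mul_le_mul_of_nonneg_left hy hM₀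

theorem abs_taylor_two_remainder_le {φ φ' φ'' : ℝ → ℝ} {K α : ℝ} (hα : 0 ≤ α)
    (hφ : ∀ t, HasDerivAt φ (φ' t) t) (hφ' : ∀ t, HasDerivAt φ' (φ'' t) t)
    (hφ'' : ∀ s t, |φ'' s - φ'' t| ≤ K * |s - t| ^ α) (e f : ℝ) :
    |φ (e + f) - φ e - φ' e * f - φ'' e / 2 * f ^ 2| ≤ K * |f| ^ (α + 2) := by
  have hK : 0 ≤ K := by simpa using (abs_nonneg _).trans (hφ'' 1 0)
  have hf : e + f ∈ closedBall e |f| := by simp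
  have hφ''_bound : ∀ y ∈ closedBall e |f|, |φ'' y - φ'' e| ≤ K * |f| ^ α := fun y hy =>
    (hφ'' y e).trans (mul_le_mul_of_nonneg_left
      (rpow_le_rpow (abs_nonneg _) (by rwa [mem_closedBall, dist_eq] at hy) hα) hK)
  have hφ'_bound : ∀ y ∈ closedBall e |f|,
      |(φ' y - φ'' e * (y - e)) - (φ' e - φ'' e * (e - e))| ≤ K * |f| ^ α * |f| := fun y hy => by
    simpa [sub_sub, add_comm] using
      abs_sub_sub_deriv_mul_le_of_abs_deriv_sub_le hφ' hφ''_bound hy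
  have h := abs_sub_sub_deriv_mul_le_of_abs_deriv_sub_le
    (g := fun y => φ y - φ'' e / 2 * (y - e) ^ 2) (g' := fun y => φ' y - φ'' e * (y - e))
    (fun y => ((hφ y).sub (((hasDerivAt_id y).sub_const e).pow 2 |>.const_mul _)).congr_deriv
      (by
        simp only [Nat.cast_ofNat, id_eq, Nat.add_one_sub_one, pow_one, mul_one, sub_right_inj]
        ring))
    hφ'_bound hf
  have hpow : |f| ^ (α + 2) = |f| ^ α * |f| * |f| := by
    rw [show α + 2 = α + (2 : ℕ) by norm_num, rpow_add_natCast' (abs_nonneg f) (by positivity),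
      mul_assoc, ← sq, sq_abs]
  rw [hpow, ← mul_assoc, ← mul_assoc]
  convert h using 2
  ring

theorem statement17 (q : ℝ) (hq1 : 2 < q) (hq2 : q ≤ 3) :
    ∃ C > 0, ∀ e f : ℝ,
      |(max (e + f) 0) ^ q - (max e 0) ^ q - q * (max e 0) ^ (q - 1) * f
          - q * (q - 1) / 2 * (max e 0) ^ (q - 2) * f ^ 2|
        ≤ C * |f| ^ q := by
  have hK : 0 < q * (q - 1) := by nlinarith
  refine ⟨q * (q - 1), hK, fun e f => ?_⟩
  have hφ' (t : ℝ) : HasDerivAt (fun s => q * max s 0 ^ (q - 1))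
      (q * (q - 1) * max t 0 ^ (q - 2)) t := by
    simpa only [mul_assoc, show q - 1 - 1 = q - 2 by ring] using
      (hasDerivAt_max_zero_rpow (p := q - 1) (by linarith) t).const_mul q
  have hφ'' (s t : ℝ) : |q * (q - 1) * max s 0 ^ (q - 2) - q * (q - 1) * max t 0 ^ (q - 2)|
      ≤ q * (q - 1) * |s - t| ^ (q - 2) := by
    rw [← mul_sub, abs_mul, abs_of_pos hK]
    exact mul_le_mul_of_nonneg_left
      (abs_max_zero_rpow_sub_max_zero_rpow_le (by linarith) (by linarith) s t) hK.le
  have h := abs_taylor_two_remainder_le (by linarith)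
    (hasDerivAt_max_zero_rpow (by linarith)) hφ' hφ'' e f
  rw [sub_add_cancel] at h
  convert h using 3
  ring
end

section
/- Let Q : ℝ³ → ℝ be smooth and bounded and let N be a positive integer. Then for every δ > 0 there exists C > 0 such that for every sufficiently small ε > 0 and every y in the closed ball of radius δ about 0: | ∫_{ℝ³}(Q(x) − Q(0))·w((x−y)/ε)^q dx − (Q(y) − Q(0))·ε³∫_{ℝ³}w^q | ≤ C( Σ_{m=1}^{N} ε^{3+m}|D^m Q(y)| + ε^{4+N} ). -/
open MeasureTheory Real Filter

noncomputable section

open scoped Nat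

/-!
After the substitution `x = y + ε z` the quantity to estimate is
`ε³ ∫ (Q (y + ε z) - Q y) w(z)^q dz`. Taylor's formula of order `N` at `y` (the `(N+1)`-st
derivative being bounded on the ball of radius `δ + 1`) where `ε |z| ≤ 1`, and the boundedness of
`Q` where `ε |z| > 1`, bound `|Q (y + ε z) - Q y|` by a polynomial in `ε |z|` of degree `N + 1`
whose coefficient of degree `m ≤ N` is `|D^m Q(y)| / m!`. Its integral against `w^q` is finite
because `w` decays exponentially.
-/

theorem pow_mul_exp_neg_mul_le {c : ℝ} (hc : 0 < c) (k : ℕ) {s : ℝ} (hs : 0 ≤ s) :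
    s ^ k * exp (-(c * s)) ≤ k ! / c ^ k := by
  have h := pow_div_factorial_le_exp (c * s) (by positivity) k
  rw [div_le_iff₀ (by positivity)] at h
  rw [le_div_iff₀ (by positivity), exp_neg, mul_right_comm, ← div_eq_mul_inv,
    div_le_iff₀ (exp_pos _), mul_comm _ (c ^ k), ← mul_pow]
  linarith

section Moments

variable {E : Type*} [NormedAddCommGroup E] [MeasurableSpace E] {μ : Measure E}

theorem integrable_norm_pow_mul_rpow_of_le_exp [OpensMeasurableSpace E] {w : E → ℝ}
    {C η p q : ℝ} (hη : 0 < η) (hp : 0 ≤ p) (hpq : p < q) (hw0 : ∀ x, 0 ≤ w x)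
    (hdecay : ∀ x, w x ≤ C * exp (-(η * ‖x‖)))
    (hwp : Integrable (fun x => w x ^ p) μ) (hwq : AEStronglyMeasurable (fun x => w x ^ q) μ)
    (k : ℕ) : Integrable (fun x => ‖x‖ ^ k * w x ^ q) μ := by
  set r := q - p
  have hr : 0 < r := sub_pos.mpr hpq
  have hC0 : 0 ≤ C := nonneg_of_mul_nonneg_left ((hw0 0).trans (hdecay 0)) (exp_pos _)
  have hbound : ∀ x, ‖x‖ ^ k * w x ^ r ≤ C ^ r * (k ! / (η * r) ^ k) := fun x => calc
    ‖x‖ ^ k * w x ^ r ≤ ‖x‖ ^ k * (C * exp (-(η * ‖x‖))) ^ r := by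
      gcongr
      · exact hw0 x
      · exact hdecay x
    _ = C ^ r * (‖x‖ ^ k * exp (-(η * r * ‖x‖))) := by
      rw [mul_rpow hC0 (exp_pos _).le, ← exp_mul]
      ring_nf
    _ ≤ C ^ r * (k ! / (η * r) ^ k) := by
      gcongr
      exact pow_mul_exp_neg_mul_le (by positivity) k (norm_nonneg x)
  refine (hwp.const_mul (C ^ r * (k ! / (η * r) ^ k))).mono'
    ((continuous_norm.pow k).aestronglyMeasurable.mul hwq) (Eventually.of_forall fun x => ?_)
  have hsplit : w x ^ q = w x ^ r * w x ^ p := by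
    rw [← rpow_add' (hw0 x) (by linarith), sub_add_cancel]
  rw [norm_of_nonneg (by have := rpow_nonneg (hw0 x) q; positivity), hsplit, ← mul_assoc]
  exact mul_le_mul_of_nonneg_right (hbound x) (rpow_nonneg (hw0 x) p)

theorem abs_integral_mul_le_of_abs_le_sum_pow {F ρ : E → ℝ} {s : Finset ℕ} {a : ℕ → ℝ}
    {b : ℝ} {n : ℕ} (hρ : ∀ z, 0 ≤ ρ z) (hmom : ∀ m, Integrable (fun z => ‖z‖ ^ m * ρ z) μ)
    (hF : ∀ z, |F z| ≤ ∑ m ∈ s, a m * ‖z‖ ^ m + b * ‖z‖ ^ n) :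
    |∫ z, F z * ρ z ∂μ| ≤
      ∑ m ∈ s, a m * ∫ z, ‖z‖ ^ m * ρ z ∂μ + b * ∫ z, ‖z‖ ^ n * ρ z ∂μ := by
  have hsum : Integrable (fun z => ∑ m ∈ s, a m * (‖z‖ ^ m * ρ z)) μ :=
    integrable_finsetSum _ fun m _ => (hmom m).const_mul _
  have hdom : Integrable (fun z => ∑ m ∈ s, a m * (‖z‖ ^ m * ρ z) + b * (‖z‖ ^ n * ρ z)) μ :=
    hsum.add ((hmom n).const_mul _)
  rw [← integral_const_mul, ← norm_eq_abs]
  simp_rw [← integral_const_mul]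
  rw [← integral_finsetSum _ fun m _ => (hmom m).const_mul _, ← integral_add hsum
    ((hmom n).const_mul _)]
  refine norm_integral_le_of_norm_le hdom (Eventually.of_forall fun z => ?_)
  rw [norm_mul, norm_eq_abs, norm_of_nonneg (hρ z)]
  calc |F z| * ρ z ≤ (∑ m ∈ s, a m * ‖z‖ ^ m + b * ‖z‖ ^ n) * ρ z :=
        mul_le_mul_of_nonneg_right (hF z) (hρ z)
    _ = _ := by
      rw [add_mul, Finset.sum_mul]
      simp only [mul_assoc]

end Moments

section Rescaling

variable {E : Type*} [NormedAddCommGroup E] [NormedSpace ℝ E] [FiniteDimensional ℝ E]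
  [MeasurableSpace E] [BorelSpace E] (μ : Measure E) [μ.IsAddHaarMeasure]

theorem integral_eq_smul_integral_comp_add_smul {F : Type*} [NormedAddCommGroup F]
    [NormedSpace ℝ F] (g : E → F) (y : E) {ε : ℝ} (hε : 0 < ε) :
    ∫ x, g x ∂μ = ε ^ Module.finrank ℝ E • ∫ z, g (y + ε • z) ∂μ := by
  rw [Measure.integral_comp_smul_of_nonneg μ (fun z => g (y + z)) ε (hR := hε.le),
    integral_add_left_eq_self, smul_inv_smul₀ (pow_ne_zero _ hε.ne')]

theorem integral_sub_mul_comp_inv_smul_sub {f ρ : E → ℝ} {M : ℝ} (hf : Continuous f)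
    (hM : ∀ x, |f x| ≤ M) (hρ : Integrable ρ μ) (c : ℝ) (y : E) {ε : ℝ} (hε : 0 < ε) :
    (∫ x, (f x - c) * ρ (ε⁻¹ • (x - y)) ∂μ) - (f y - c) * ε ^ Module.finrank ℝ E * ∫ x, ρ x ∂μ
      = ε ^ Module.finrank ℝ E * ∫ z, (f (y + ε • z) - f y) * ρ z ∂μ := by
  have hint : Integrable (fun z => (f (y + ε • z) - f y) * ρ z) μ :=
    hρ.bdd_mul (c := 2 * M) ((hf.comp (by fun_prop)).sub continuous_const).aestronglyMeasurable
      (Eventually.of_forall fun z => by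
        rw [norm_eq_abs]
        linarith [abs_sub (f (y + ε • z)) (f y), hM (y + ε • z), hM y])
  have hsplit : ∀ z, (f (y + ε • z) - c) * ρ z = (f (y + ε • z) - f y) * ρ z + (f y - c) * ρ z :=
    fun z => by ring
  rw [integral_eq_smul_integral_comp_add_smul μ _ y hε, smul_eq_mul]
  simp only [add_sub_cancel_left, inv_smul_smul₀ hε.ne', hsplit]
  rw [integral_add hint (hρ.const_mul _), integral_const_mul]
  ring

end Rescaling

section Taylor

variable {E F : Type*} [NormedAddCommGroup E] [NormedSpace ℝ E] [NormedAddCommGroup F]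
  [NormedSpace ℝ F] {f : E → F} {n : ℕ}

theorem norm_sub_sum_iteratedFDeriv_le [CompleteSpace F] (hf : ContDiff ℝ (n + 1) f)
    {x y : E} {B : ℝ} (hB : ∀ t ∈ Set.Icc (0 : ℝ) 1, ‖iteratedFDeriv ℝ (n + 1) f (x + t • y)‖ ≤ B) :
    ‖f (x + y) - ∑ k ∈ Finset.range (n + 1), (k ! : ℝ)⁻¹ • iteratedFDeriv ℝ k f x (fun _ => y)‖
      ≤ B * ‖y‖ ^ (n + 1) / n ! := by
  rw [map_add_eq_sum_add_integral_iteratedFDeriv fun t _ => hf.contDiffAt, add_sub_cancel_left,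
    norm_smul, norm_inv, RCLike.norm_natCast, inv_mul_eq_div]
  gcongr
  have hrem : ∀ t ∈ Set.uIoc (0 : ℝ) 1,
      ‖(1 - t) ^ n • iteratedFDeriv ℝ (n + 1) f (x + t • y) (fun _ => y)‖ ≤ B * ‖y‖ ^ (n + 1) := by
    intro t ht
    obtain ⟨ht0, ht1⟩ : 0 < t ∧ t ≤ 1 := by rwa [Set.uIoc_of_le zero_le_one] at ht
    rw [norm_smul, norm_pow, Real.norm_of_nonneg (by linarith)]
    have hD := (iteratedFDeriv ℝ (n + 1) f (x + t • y)).le_opNorm_mul_pow_of_le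
      (pi_norm_const_le y)
    calc (1 - t) ^ n * ‖iteratedFDeriv ℝ (n + 1) f (x + t • y) (fun _ => y)‖
        ≤ 1 * (B * ‖y‖ ^ (n + 1)) := by
          gcongr
          · exact pow_le_one₀ (by linarith) (by linarith)
          · exact hD.trans (by gcongr; exact hB t ⟨ht0.le, ht1⟩)
      _ = B * ‖y‖ ^ (n + 1) := one_mul _
  simpa using intervalIntegral.norm_integral_le_of_norm_le_const hrem

theorem norm_smul_iteratedFDeriv_apply_const_le (k : ℕ) (x y : E) :
    ‖(k ! : ℝ)⁻¹ • iteratedFDeriv ℝ k f x (fun _ => y)‖ ≤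
      ‖iteratedFDeriv ℝ k f x‖ / k ! * ‖y‖ ^ k := by
  rw [norm_smul, norm_inv, RCLike.norm_natCast, inv_mul_eq_div, div_mul_eq_mul_div]
  gcongr
  exact (iteratedFDeriv ℝ k f x).le_opNorm_mul_pow_of_le (pi_norm_const_le y)

theorem norm_sub_le_sum_norm_iteratedFDeriv_mul_pow [CompleteSpace F] (hf : ContDiff ℝ (n + 1) f)
    {M B : ℝ} (hM : ∀ x, ‖f x‖ ≤ M) {x : E}
    (hB : ∀ z ∈ Metric.closedBall x 1, ‖iteratedFDeriv ℝ (n + 1) f z‖ ≤ B) (y : E) :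
    ‖f (x + y) - f x‖ ≤ ∑ k ∈ Finset.Icc 1 n, ‖iteratedFDeriv ℝ k f x‖ / k ! * ‖y‖ ^ k
      + (B / n ! + 2 * M) * ‖y‖ ^ (n + 1) := by
  have hM0 : 0 ≤ M := (norm_nonneg _).trans (hM x)
  have hB0 : 0 ≤ B := (norm_nonneg _).trans (hB x (Metric.mem_closedBall_self zero_le_one))
  rcases le_or_gt ‖y‖ 1 with hy | hy
  · have hseg : ∀ t ∈ Set.Icc (0 : ℝ) 1, ‖iteratedFDeriv ℝ (n + 1) f (x + t • y)‖ ≤ B := by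
      refine fun t ht => hB _ ?_
      rw [Metric.mem_closedBall, dist_self_add_left, norm_smul, norm_of_nonneg ht.1]
      exact mul_le_one₀ ht.2 (norm_nonneg y) hy
    have hrange : Finset.range (n + 1) = insert 0 (Finset.Icc 1 n) := by
      rw [Finset.range_eq_Ico, Finset.Ico_add_one_right_eq_Icc]
      exact (Finset.insert_Icc_add_one_left_eq_Icc n.zero_le).symm
    have hTaylor := norm_sub_sum_iteratedFDeriv_le hf hseg
    rw [hrange, Finset.sum_insert (by simp), Nat.factorial_zero, Nat.cast_one, inv_one, one_smul,
      iteratedFDeriv_zero_apply, ← sub_sub] at hTaylor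
    calc ‖f (x + y) - f x‖ ≤ B * ‖y‖ ^ (n + 1) / n ! + ∑ k ∈ Finset.Icc 1 n,
          ‖iteratedFDeriv ℝ k f x‖ / k ! * ‖y‖ ^ k := by
          rw [← sub_add_cancel (f (x + y) - f x)]
          exact norm_add_le_of_le hTaylor
            (norm_sum_le_of_le _ fun k _ => norm_smul_iteratedFDeriv_apply_const_le k x y)
      _ ≤ _ := by
        rw [add_comm, add_mul, div_mul_eq_mul_div, mul_div_right_comm]
        gcongr
        exact le_add_of_nonneg_right (by positivity)
  · calc ‖f (x + y) - f x‖ ≤ 2 * M := by linarith [norm_sub_le (f (x + y)) (f x), hM (x + y), hM x]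
      _ ≤ 2 * M * ‖y‖ ^ (n + 1) := le_mul_of_one_le_right (by positivity) (one_le_pow₀ hy.le)
      _ ≤ (B / n ! + 2 * M) * ‖y‖ ^ (n + 1) := by
        gcongr
        exact le_add_of_nonneg_left (by positivity)
      _ ≤ _ := le_add_of_nonneg_left (by positivity)

end Taylor

theorem abs_integral_sub_mul_le_sum_moments {E : Type*} [NormedAddCommGroup E] [NormedSpace ℝ E]
    [MeasurableSpace E] {μ : Measure E} {f ρ : E → ℝ} {n : ℕ} {M B : ℝ}
    (hf : ContDiff ℝ (n + 1) f) (hM : ∀ x, |f x| ≤ M) {x : E}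
    (hB : ∀ z ∈ Metric.closedBall x 1, ‖iteratedFDeriv ℝ (n + 1) f z‖ ≤ B)
    (hρ : ∀ z, 0 ≤ ρ z) (hmom : ∀ m, Integrable (fun z => ‖z‖ ^ m * ρ z) μ) {ε : ℝ}
    (hε : 0 < ε) :
    |∫ z, (f (x + ε • z) - f x) * ρ z ∂μ| ≤
      ∑ m ∈ Finset.Icc 1 n, ε ^ m * ‖iteratedFDeriv ℝ m f x‖ * ((∫ z, ‖z‖ ^ m * ρ z ∂μ) / m !)
        + ε ^ (n + 1) * ((B / n ! + 2 * M) * ∫ z, ‖z‖ ^ (n + 1) * ρ z ∂μ) := by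
  have hpt : ∀ z, |f (x + ε • z) - f x| ≤
      ∑ m ∈ Finset.Icc 1 n, ‖iteratedFDeriv ℝ m f x‖ / m ! * ε ^ m * ‖z‖ ^ m
        + (B / n ! + 2 * M) * ε ^ (n + 1) * ‖z‖ ^ (n + 1) := fun z => by
    have h := norm_sub_le_sum_norm_iteratedFDeriv_mul_pow hf
      (fun x => (norm_eq_abs (f x)).trans_le (hM x)) hB (ε • z)
    simpa only [norm_eq_abs, norm_smul, abs_of_pos hε, mul_pow, mul_assoc] using h
  refine (abs_integral_mul_le_of_abs_le_sum_pow hρ hmom hpt).trans_eq ?_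
  congr 1
  · exact Finset.sum_congr rfl fun m _ => by ring
  · ring

theorem pow_mul_sum_add_le_mul_sum_add {s : Finset ℕ} {a c : ℕ → ℝ} {d ε : ℝ} {k n l : ℕ}
    (hε : 0 ≤ ε) (ha : ∀ m, 0 ≤ a m) (hc : ∀ m, 0 ≤ c m) (hd : 0 ≤ d) (hl : k + n = l) :
    ε ^ k * (∑ m ∈ s, ε ^ m * a m * c m + ε ^ n * d) ≤
      (∑ m ∈ s, c m + d + 1) * (∑ m ∈ s, ε ^ (k + m) * a m + ε ^ l) := by
  have hsum : 0 ≤ ∑ m ∈ s, c m := Finset.sum_nonneg fun m _ => hc m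
  calc ε ^ k * (∑ m ∈ s, ε ^ m * a m * c m + ε ^ n * d)
      = ∑ m ∈ s, ε ^ (k + m) * a m * c m + ε ^ l * d := by
        rw [mul_add, Finset.mul_sum, ← hl]
        congr 1
        · exact Finset.sum_congr rfl fun m _ => by ring
        · ring
    _ ≤ ∑ m ∈ s, ε ^ (k + m) * a m * (∑ m ∈ s, c m + d + 1) + ε ^ l * (∑ m ∈ s, c m + d + 1) := by
        gcongr with m hm
        · exact mul_nonneg (pow_nonneg hε _) (ha m)
        · linarith [Finset.single_le_sum (fun i _ => hc i) hm]
        · linarith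
    _ = _ := by rw [← Finset.sum_mul]; ring

theorem statement19_general (q η C₀ : ℝ) (hq1 : 2 < q) (hη : 0 < η) (hC₀ : 0 < C₀)
    (w : E3 → ℝ) (hwpos : ∀ x, 0 < w x)
    (hwint : ∀ q' : ℝ, 0 < q' → Integrable fun x : E3 => (w x) ^ q')
    (hwdecay : ∀ x, w x ≤ C₀ * (1 + ‖x‖)⁻¹ * Real.exp (-η * ‖x‖))
    (Q : E3 → ℝ) (hQs : ∀ n : ℕ, ContDiff ℝ n Q) (hQb : ∃ M, ∀ x, |Q x| ≤ M)
    (N : ℕ) :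
    ∀ δ > (0 : ℝ), ∃ C > 0, ∃ ε₀ > 0, ∀ ε ∈ Set.Ioc (0 : ℝ) ε₀, ∀ y : E3, ‖y‖ ≤ δ →
      |(∫ x : E3, (Q x - Q 0) * (w (ε⁻¹ • (x - y))) ^ q)
          - (Q y - Q 0) * ε ^ 3 * ∫ x : E3, (w x) ^ q|
        ≤ C * ((∑ m ∈ Finset.Icc 1 N, ε ^ (3 + m) * ‖iteratedFDeriv ℝ m Q y‖)
            + ε ^ (4 + N)) := by
  intro δ _
  obtain ⟨M, hM⟩ := hQb
  obtain ⟨B, hB⟩ : ∃ B, ∀ x ∈ Metric.closedBall (0 : E3) (δ + 1),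
      ‖iteratedFDeriv ℝ (N + 1) Q x‖ ≤ B :=
    (isCompact_closedBall _ _).exists_bound_of_continuousOn
      ((hQs (N + 1)).continuous_iteratedFDeriv le_rfl).continuousOn
  have hw0 : ∀ x, 0 ≤ w x ^ q := fun x => rpow_nonneg (hwpos x).le q
  have hdecay : ∀ x, w x ≤ C₀ * exp (-(η * ‖x‖)) := fun x => (hwdecay x).trans <| by
    rw [neg_mul, mul_right_comm]
    exact mul_le_of_le_one_right (by positivity)
      (inv_le_one_of_one_le₀ (le_add_of_nonneg_right (norm_nonneg x)))
  have hmom : ∀ k : ℕ, Integrable (fun z : E3 => ‖z‖ ^ k * w z ^ q) :=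
    integrable_norm_pow_mul_rpow_of_le_exp hη (p := q / 2) (by positivity) (by linarith)
      (fun x => (hwpos x).le) hdecay (hwint _ (by positivity))
      (hwint q (by positivity)).aestronglyMeasurable
  set I : ℕ → ℝ := fun k => ∫ z : E3, ‖z‖ ^ k * w z ^ q
  have hI : ∀ k, 0 ≤ I k := fun k => integral_nonneg fun z => mul_nonneg (by positivity) (hw0 z)
  have hc : ∀ m, 0 ≤ I m / m ! := fun m => div_nonneg (hI m) (by positivity)
  have hd : 0 ≤ (B / N ! + 2 * M) * I (N + 1) := by
    have := (norm_nonneg _).trans (hB 0 (Metric.mem_closedBall_self (by positivity)))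
    have := (abs_nonneg _).trans (hM 0)
    have := hI (N + 1)
    positivity
  refine ⟨∑ m ∈ Finset.Icc 1 N, I m / m ! + (B / N ! + 2 * M) * I (N + 1) + 1,
    by linarith [Finset.sum_nonneg fun m (_ : m ∈ Finset.Icc 1 N) => hc m], 1, one_pos, ?_⟩
  rintro ε ⟨hε, -⟩ y hy
  have hchange := integral_sub_mul_comp_inv_smul_sub volume (hQs 0).continuous hM
    (hwint q (by positivity)) (Q 0) y hε
  rw [finrank_euclideanSpace_fin] at hchange
  rw [hchange, abs_mul, abs_of_pos (by positivity)]
  calc _ ≤ ε ^ 3 * (∑ m ∈ Finset.Icc 1 N, ε ^ m * ‖iteratedFDeriv ℝ m Q y‖ * (I m / m !)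
          + ε ^ (N + 1) * ((B / N ! + 2 * M) * I (N + 1))) := by
        gcongr
        refine abs_integral_sub_mul_le_sum_moments (by exact_mod_cast hQs (N + 1)) hM
          (fun z hz => hB z (Metric.closedBall_subset_closedBall' ?_ hz)) hw0 hmom hε
        rw [dist_zero_right]
        linarith
    _ ≤ _ := pow_mul_sum_add_le_mul_sum_add hε.le (fun m => norm_nonneg _) hc hd (by omega)

theorem statement19 (q η C₀ : ℝ) (hq1 : 2 < q) (hq2 : q < 6) (hη : 0 < η) (hC₀ : 0 < C₀)
    (w : E3 → ℝ) (hwpos : ∀ x, 0 < w x) (hwcont : Continuous w)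
    (hwrad : ∀ x y : E3, ‖x‖ = ‖y‖ → w x = w y)
    (hwint : ∀ q' : ℝ, 0 < q' → Integrable fun x : E3 => (w x) ^ q')
    (hwdecay : ∀ x, w x ≤ C₀ * (1 + ‖x‖)⁻¹ * Real.exp (-η * ‖x‖))
    (Q : E3 → ℝ) (hQs : ∀ n : ℕ, ContDiff ℝ n Q) (hQb : ∃ M, ∀ x, |Q x| ≤ M)
    (N : ℕ) (hN : 0 < N) :
    ∀ δ > (0 : ℝ), ∃ C > 0, ∃ ε₀ > 0, ∀ ε ∈ Set.Ioc (0 : ℝ) ε₀, ∀ y : E3, ‖y‖ ≤ δ →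
      |(∫ x : E3, (Q x - Q 0) * (w (ε⁻¹ • (x - y))) ^ q)
          - (Q y - Q 0) * ε ^ 3 * ∫ x : E3, (w x) ^ q|
        ≤ C * ((∑ m ∈ Finset.Icc 1 N, ε ^ (3 + m) * ‖iteratedFDeriv ℝ m Q y‖)
            + ε ^ (4 + N)) :=
  statement19_general q η C₀ hq1 hη hC₀ w hwpos hwint hwdecay Q hQs hQb N

end
end
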